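/- arXiv:1708.09777 — 9 statements merged into one kernel-verified Lean document; each statement's English description precedes it below -/
import Mathlib

section
/- Let n ≥ 5 be an integer and define g(n) = 2(n+1) if n ≡ 0 (mod 4) and g(n) = 2n otherwise. Then for every weighting f: E(K_n) → {-1, 1} satisfying |∑_{e ∈ E(K_n)} f(e)| ≤ C(n,2) − g(n), there exists a 4-element subset S of the vertices whose six edges have weights summing to 0 (a zero-sum copy of K_4). -/
/-!
Call the pairs of weight `1` the edges of a graph `G`. A `K₄` is zero-sum exactly when it spans
three edges of `G`, a condition invariant under complementation. Without such a `K₄`, `G` and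
`Gᶜ` cannot both contain a triangle; in the triangle-free one every vertex has degree at most `2`,
and if it is `2`-regular it is a disjoint union of induced `4`-cycles. So that colour class has at
most `n` edges, and exactly `n` only if `4 ∣ n`, whereas the bound on the total weight gives both
classes at least `g(n) / 2` edges.
-/

open Finset

theorem Fintype.dvd_card_of_card_fiber_eq {α β : Type*} [Fintype α] [DecidableEq β]
    (φ : α → β) {k : ℕ} (h : ∀ a, #{b | φ b = φ a} = k) : k ∣ Fintype.card α := by
  rw [← card_univ, card_eq_sum_card_image φ, sum_const_nat]
  · exact dvd_mul_left _ _
  · simp only [mem_image, mem_univ, true_and]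
    rintro _ ⟨a, rfl⟩
    exact h a

namespace Finset

variable {V : Type*}

theorem sum_powersetCard_two_eq_two_mul_card_filter_sub {s : Finset V} {f : Finset V → ℤ}
    (hf : ∀ e ∈ powersetCard 2 s, f e = -1 ∨ f e = 1) :
    ∑ e ∈ powersetCard 2 s, f e = 2 * #{e ∈ powersetCard 2 s | f e = 1} - (#s).choose 2 := by
  rw [card_filter, ← card_powersetCard, card_eq_sum_ones, Nat.cast_sum, Nat.cast_sum, mul_sum,
    ← sum_sub_distrib]
  refine sum_congr rfl fun e he => ?_
  rcases hf e he with h | h <;> simp [h]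

variable [DecidableEq V] {β : Type*} [AddCommMonoid β]

theorem sum_powersetCard_two_insert (f : Finset V → β) {x : V} {s : Finset V} (hx : x ∉ s) :
    ∑ e ∈ powersetCard 2 (insert x s), f e = ∑ e ∈ powersetCard 2 s, f e + ∑ y ∈ s, f {x, y} := by
  rw [powersetCard_succ_insert hx, powersetCard_one, map_eq_image, image_image,
    sum_union (by grind [Finset.disjoint_left]), sum_image]
  · rfl
  · intro y _ z hz h
    have : z = x ∨ z = y := by simpa using congrArg (z ∈ ·) h
    exact (this.resolve_left (ne_of_mem_of_not_mem hz hx)).symm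

theorem sum_powersetCard_two_four (f : Finset V → β) {a b c d : V} (hab : a ≠ b) (hac : a ≠ c)
    (had : a ≠ d) (hbc : b ≠ c) (hbd : b ≠ d) (hcd : c ≠ d) :
    ∑ e ∈ powersetCard 2 {a, b, c, d}, f e =
      f {a, b} + f {a, c} + f {a, d} + f {b, c} + f {b, d} + f {c, d} := by
  rw [sum_powersetCard_two_insert f (by simp [*]), sum_powersetCard_two_insert f (by simp [*]),
    sum_powersetCard_two_insert f (by simp [*]), powersetCard_eq_empty.2 (by simp)]
  simp [sum_insert, *]
  abel

end Finset

namespace SimpleGraph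

variable {V : Type*} [DecidableEq V]

theorem IsNClique.exists_adj_of_mem {G : SimpleGraph V} {s : Finset V} {v : V}
    (hs : G.IsNClique 3 s) (hv : v ∈ s) : ∃ b c, G.Adj v b ∧ G.Adj v c ∧ G.Adj b c := by
  obtain ⟨a, b, c, hab, hac, hbc, rfl⟩ := is3Clique_iff.1 hs
  simp only [mem_insert, mem_singleton] at hv
  rcases hv with rfl | rfl | rfl
  exacts [⟨b, c, hab, hac, hbc⟩, ⟨a, c, hab.symm, hbc, hac⟩, ⟨a, b, hac.symm, hbc.symm, hab⟩]

theorem CliqueFree.not_adj_of_adj_of_adj {G : SimpleGraph V} (h3 : G.CliqueFree 3) {v a b : V}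
    (ha : G.Adj v a) (hb : G.Adj v b) : ¬G.Adj a b :=
  fun hab => h3 {v, a, b} (is3Clique_triple_iff.2 ⟨ha, hb, hab⟩)

variable (G : SimpleGraph V) [DecidableRel G.Adj]

theorem card_edgeFinset_add_card_edgeFinset_compl [Fintype V] :
    #G.edgeFinset + #Gᶜ.edgeFinset = (Fintype.card V).choose 2 := by
  rw [← card_union_of_disjoint (disjoint_edgeFinset.2 disjoint_compl_right), ← edgeFinset_sup,
    ← card_edgeFinset_top_eq_card_choose_two]
  congr!
  exact sup_compl_eq_top

def edgesAmong (a b c d : V) : ℕ :=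
  (if G.Adj a b then 1 else 0) + (if G.Adj a c then 1 else 0) + (if G.Adj a d then 1 else 0) +
    (if G.Adj b c then 1 else 0) + (if G.Adj b d then 1 else 0) + (if G.Adj c d then 1 else 0)

/-- Four vertices spanning exactly three edges of `G` form a zero-sum `K₄` for the `±1` weighting
that is `1` exactly on the edges of `G`. -/
def NoThreeEdgeQuad : Prop :=
  ∀ ⦃a b c d : V⦄, a ≠ b → a ≠ c → a ≠ d → b ≠ c → b ≠ d → c ≠ d → G.edgesAmong a b c d ≠ 3

variable {G}

theorem eq_or_eq_of_degree_eq_two [Fintype V] {v a b w : V} (hv : G.degree v = 2)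
    (ha : G.Adj v a) (hb : G.Adj v b) (hab : a ≠ b) (hw : G.Adj v w) : w = a ∨ w = b := by
  have : {a, b} = G.neighborFinset v := eq_of_subset_of_card_le
    (by simp [insert_subset_iff, ha, hb]) (by rw [card_neighborFinset_eq_degree, hv, card_pair hab])
  have hw' : w ∈ ({a, b} : Finset V) := this ▸ (G.mem_neighborFinset v w).2 hw
  simpa using hw'

theorem IsRegularOfDegree.reachable_iff_of_square [Fintype V] (hG : G.IsRegularOfDegree 2)
    {v p q r u : V} (hvp : G.Adj v p) (hvq : G.Adj v q) (hpr : G.Adj p r) (hqr : G.Adj q r)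
    (hpq : p ≠ q) (hvr : v ≠ r) : G.Reachable v u ↔ u ∈ ({v, p, q, r} : Finset V) := by
  constructor
  · intro h
    have := h.mem_subgraphVerts (H := (⊤ : G.Subgraph).induce {v, p, q, r}) ?_ (by simp)
    · simpa using this
    simp only [Subgraph.induce_verts, Subgraph.induce_adj, Subgraph.top_adj]
    intro x hx w hxw
    refine ⟨hx, ?_, hxw⟩
    simp only [Set.mem_insert_iff, Set.mem_singleton_iff] at hx ⊢
    rcases hx with rfl | rfl | rfl | rfl
    · have := eq_or_eq_of_degree_eq_two (hG x) hvp hvq hpq hxw; tauto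
    · have := eq_or_eq_of_degree_eq_two (hG x) hvp.symm hpr hvr hxw; tauto
    · have := eq_or_eq_of_degree_eq_two (hG x) hvq.symm hqr hvr hxw; tauto
    · have := eq_or_eq_of_degree_eq_two (hG x) hpr.symm hqr.symm hpq hxw; tauto
  · simp only [mem_insert, mem_singleton]
    rintro (rfl | rfl | rfl | rfl)
    exacts [.rfl, hvp.reachable, hvq.reachable, hvp.reachable.trans hpr.reachable]

namespace NoThreeEdgeQuad

variable (hG : G.NoThreeEdgeQuad)
include hG

theorem compl : Gᶜ.NoThreeEdgeQuad := by
  intro a b c d hab hac had hbc hbd hcd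
  have := hG hab hac had hbc hbd hcd
  simp only [edgesAmong, compl_adj, ne_eq, *, not_false_eq_true, true_and] at this ⊢
  split_ifs at this ⊢ <;> omega

theorem disjoint_of_isNClique_compl {s t : Finset V} (hs : G.IsNClique 3 s)
    (ht : Gᶜ.IsNClique 3 t) : Disjoint s t := by
  rw [Finset.disjoint_left]
  intro a has hat
  obtain ⟨b, c, hab, hac, hbc⟩ := hs.exists_adj_of_mem has
  obtain ⟨y, z, hay, haz, hyz⟩ := ht.exists_adj_of_mem hat
  rw [compl_adj] at hay haz hyz
  have hby : b ≠ y := by rintro rfl; exact hay.2 hab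
  have hbz : b ≠ z := by rintro rfl; exact haz.2 hab
  have hcy : c ≠ y := by rintro rfl; exact hay.2 hac
  have hcz : c ≠ z := by rintro rfl; exact haz.2 hac
  -- `y` and `z` each see `b` or `c`, neither `b` nor `c` sees both `y` and `z`, so
  -- `{b, c, y, z}` spans exactly three edges.
  have habcy := hG hab.ne hac.ne hay.1 hbc.ne hby hcy
  have habcz := hG hab.ne hac.ne haz.1 hbc.ne hbz hcz
  have habyz := hG hab.ne hay.1 haz.1 hby hbz hyz.1
  have hacyz := hG hac.ne hay.1 haz.1 hcy hcz hyz.1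
  have hbcyz := hG hbc.ne hby hbz hcy hcz hyz.1
  simp only [edgesAmong, hab, hac, hbc, hay.2, haz.2, hyz.2, if_true, if_false] at *
  split_ifs at * <;> omega

theorem cliqueFree_three_or_compl : G.CliqueFree 3 ∨ Gᶜ.CliqueFree 3 := by
  by_contra! h
  obtain ⟨⟨s, hs⟩, ⟨t, ht⟩⟩ : (∃ s, G.IsNClique 3 s) ∧ ∃ t, Gᶜ.IsNClique 3 t := by
    simpa [CliqueFree] using h
  have hst := hG.disjoint_of_isNClique_compl hs ht
  have adj_or_adj : ∀ u ∈ s, ∀ p ∈ t, ∀ q ∈ t, Gᶜ.Adj p q → G.Adj u p ∨ G.Adj u q := by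
    intro u hu p hp q hq hpq
    by_contra! h
    have hcl : Gᶜ.IsNClique 3 {u, p, q} := is3Clique_triple_iff.2
      ⟨(compl_adj ..).2 ⟨(Finset.disjoint_left.1 hst hu <| · ▸ hp), h.1⟩,
        (compl_adj ..).2 ⟨(Finset.disjoint_left.1 hst hu <| · ▸ hq), h.2⟩, hpq⟩
    exact Finset.disjoint_left.1 (hG.disjoint_of_isNClique_compl hs hcl) hu (mem_insert_self ..)
  obtain ⟨a, b, c, hab, hac, hbc, rfl⟩ := is3Clique_iff.1 hs
  obtain ⟨x, y, z, hxy, hxz, hyz, rfl⟩ := is3Clique_iff.1 ht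
  -- `a` and `b` each miss at most one vertex of `t`, hence have a common neighbour in `t`.
  obtain ⟨w, hw, haw, hbw⟩ : ∃ w ∈ ({x, y, z} : Finset V), G.Adj a w ∧ G.Adj b w := by
    have hxy' := adj_or_adj a (by simp) x (by simp) y (by simp) hxy
    have hxz' := adj_or_adj a (by simp) x (by simp) z (by simp) hxz
    have hyz' := adj_or_adj a (by simp) y (by simp) z (by simp) hyz
    have hxy'' := adj_or_adj b (by simp) x (by simp) y (by simp) hxy
    have hxz'' := adj_or_adj b (by simp) x (by simp) z (by simp) hxz
    have hyz'' := adj_or_adj b (by simp) y (by simp) z (by simp) hyz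
    simp only [mem_insert, mem_singleton, exists_eq_or_imp, exists_eq_left]
    tauto
  exact Finset.disjoint_left.1 (hG.disjoint_of_isNClique_compl
    (is3Clique_triple_iff.2 ⟨hab, haw, hbw⟩) ht) (by simp) hw

variable (h3 : G.CliqueFree 3)
include h3

theorem adj_of_adj_of_adj_of_adj {q v p r : V} (hqv : G.Adj q v) (hvp : G.Adj v p)
    (hpr : G.Adj p r) (hqp : q ≠ p) (hvr : v ≠ r) : G.Adj q r := by
  have hqp' := h3.not_adj_of_adj_of_adj hqv.symm hvp
  have hvr' := h3.not_adj_of_adj_of_adj hvp.symm hpr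
  have hqr : q ≠ r := by rintro rfl; exact hqp' hpr.symm
  -- otherwise `q - v - p - r` is an induced path, with three edges
  by_contra hqr'
  have := hG hqv.ne hqp hqr hvp.ne hvr hpr.ne
  simp [edgesAmong, hqv, hvp, hpr, hqp', hvr', hqr'] at this

variable [Fintype V]

theorem degree_le_two (v : V) : G.degree v ≤ 2 := by
  by_contra! h
  rw [← card_neighborFinset_eq_degree] at h
  obtain ⟨a, b, c, ha, hb, hc, hab, hac, hbc⟩ := two_lt_card_iff.1 h
  rw [mem_neighborFinset] at ha hb hc
  have := hG ha.ne hb.ne hc.ne hab hac hbc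
  simp [edgesAmong, ha, hb, hc, h3.not_adj_of_adj_of_adj ha hb, h3.not_adj_of_adj_of_adj ha hc,
    h3.not_adj_of_adj_of_adj hb hc] at this

theorem four_dvd_card (hreg : G.IsRegularOfDegree 2) : 4 ∣ Fintype.card V := by
  classical
  refine Fintype.dvd_card_of_card_fiber_eq G.connectedComponentMk fun v => ?_
  obtain ⟨p, q, hpq, hvpq⟩ := card_eq_two.1 ((G.card_neighborFinset_eq_degree v).trans (hreg v))
  have hvp : G.Adj v p := by simp [← mem_neighborFinset, hvpq]
  have hvq : G.Adj v q := by simp [← mem_neighborFinset, hvpq]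
  obtain ⟨r, hpr, hrv⟩ : ∃ r, G.Adj p r ∧ r ≠ v := by
    obtain ⟨r, hr, hrv⟩ :=
      exists_mem_ne (by rw [G.card_neighborFinset_eq_degree p, hreg p]; norm_num) v
    exact ⟨r, (mem_neighborFinset ..).1 hr, hrv⟩
  have hqr := hG.adj_of_adj_of_adj_of_adj h3 hvq.symm hvp hpr hpq.symm hrv.symm
  have : ({u | G.connectedComponentMk u = G.connectedComponentMk v} : Finset V) =
      {v, p, q, r} := by
    ext u
    simp only [mem_filter, mem_univ, true_and, ConnectedComponent.eq]
    exact reachable_comm.trans (hreg.reachable_iff_of_square hvp hvq hpr hqr hpq hrv.symm)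
  rw [this, card_insert_of_notMem, card_insert_of_notMem, card_pair hqr.ne]
  · simp [hpq, hpr.ne]
  · simp [hvp.ne, hvq.ne, hrv.symm]

theorem card_edgeFinset_lt :
    #G.edgeFinset < if Fintype.card V % 4 = 0 then Fintype.card V + 1 else Fintype.card V := by
  have hdeg : ∀ v ∈ univ, G.degree v ≤ 2 := fun v _ => hG.degree_le_two h3 v
  have hreg : ∑ v, G.degree v = ∑ _v : V, 2 ↔ _ := sum_eq_sum_iff_of_le hdeg
  rw [sum_degrees_eq_twice_card_edges, sum_const, card_univ, smul_eq_mul] at hreg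
  have hle : 2 * #G.edgeFinset ≤ Fintype.card V * 2 := by
    simpa [sum_degrees_eq_twice_card_edges] using sum_le_sum hdeg
  split_ifs with h4
  · omega
  refine lt_of_le_of_ne (by omega) fun hE => h4 (Nat.mod_eq_zero_of_dvd ?_)
  exact hG.four_dvd_card h3 fun v => hreg.1 (by omega) v (mem_univ v)

end NoThreeEdgeQuad

end SimpleGraph

section Weighting

variable {V : Type*} [DecidableEq V]

@[simps]
def posGraph (f : Finset V → ℤ) : SimpleGraph V where
  Adj u v := u ≠ v ∧ f {u, v} = 1
  symm := ⟨fun u v h => ⟨h.1.symm, pair_comm u v ▸ h.2⟩⟩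
  loopless := ⟨fun _ h => h.1 rfl⟩

instance (f : Finset V → ℤ) : DecidableRel (posGraph f).Adj :=
  fun u v => inferInstanceAs (Decidable (u ≠ v ∧ f {u, v} = 1))

namespace posGraph

variable [Fintype V]

theorem card_edgeFinset (f : Finset V → ℤ) :
    #(posGraph f).edgeFinset = #{e ∈ powersetCard 2 univ | f e = 1} := by
  refine card_bij (fun z _ => z.toFinset) ?_ ?_ ?_
  · rintro ⟨u, v⟩ huv
    rw [SimpleGraph.mem_edgeFinset, SimpleGraph.mem_edgeSet] at huv
    simp [Sym2.toFinset_mk_eq, card_pair huv.1, huv.2]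
  · exact fun z _ z' _ h => Sym2.ext fun x => by rw [← Sym2.mem_toFinset, h, Sym2.mem_toFinset]
  · intro e he
    simp only [mem_filter, mem_powersetCard, subset_univ, true_and] at he
    obtain ⟨u, v, huv, rfl⟩ := card_eq_two.1 he.1
    exact ⟨s(u, v), SimpleGraph.mem_edgeFinset.2 ⟨huv, he.2⟩, Sym2.toFinset_mk_eq⟩

variable {f : Finset V → ℤ} (hf : ∀ e ∈ powersetCard 2 (univ : Finset V), f e = -1 ∨ f e = 1)
include hf

theorem sum_eq_two_mul_card_edgeFinset_sub :
    ∑ e ∈ powersetCard 2 univ, f e = 2 * #(posGraph f).edgeFinset - (Fintype.card V).choose 2 := by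
  rw [sum_powersetCard_two_eq_two_mul_card_filter_sub hf, card_edgeFinset, card_univ]

theorem weight_eq {u v : V} (huv : u ≠ v) :
    f {u, v} = if (posGraph f).Adj u v then 1 else -1 := by
  rcases hf {u, v} (by simp [card_pair huv]) with h | h <;> simp [h, huv]

theorem noThreeEdgeQuad
    (H : ∀ S ∈ powersetCard 4 (univ : Finset V), ∑ e ∈ powersetCard 2 S, f e ≠ 0) :
    (posGraph f).NoThreeEdgeQuad := by
  intro a b c d hab hac had hbc hbd hcd h
  refine H {a, b, c, d} (mem_powersetCard.2 ⟨subset_univ _, card_eq_four.2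
    ⟨a, b, c, d, hab, hac, had, hbc, hbd, hcd, rfl⟩⟩) ?_
  rw [sum_powersetCard_two_four f hab hac had hbc hbd hcd, weight_eq hf hab, weight_eq hf hac,
    weight_eq hf had, weight_eq hf hbc, weight_eq hf hbd, weight_eq hf hcd]
  simp only [SimpleGraph.edgesAmong] at h
  split_ifs at h ⊢ <;> omega

end posGraph

end Weighting

theorem zero_sum_K4_of_bounded_sum_general (n : ℕ) (f : Finset (Fin n) → ℤ)
    (hf : ∀ e ∈ Finset.powersetCard 2 (Finset.univ : Finset (Fin n)), f e = -1 ∨ f e = 1)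
    (hsum : |∑ e ∈ Finset.powersetCard 2 (Finset.univ : Finset (Fin n)), f e| ≤
      (n.choose 2 : ℤ) - (if n % 4 = 0 then 2 * ((n : ℤ) + 1) else 2 * (n : ℤ))) :
    ∃ S ∈ Finset.powersetCard 4 (Finset.univ : Finset (Fin n)),
      (∑ e ∈ Finset.powersetCard 2 S, f e) = 0 := by
  by_contra! H
  have hG := posGraph.noThreeEdgeQuad hf H
  have hcompl := (posGraph f).card_edgeFinset_add_card_edgeFinset_compl
  rw [posGraph.sum_eq_two_mul_card_edgeFinset_sub hf, abs_le] at hsum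
  simp only [Fintype.card_fin] at hsum hcompl
  rcases hG.cliqueFree_three_or_compl with h3 | h3
  · have := hG.card_edgeFinset_lt h3
    rw [Fintype.card_fin] at this
    split_ifs at hsum this <;> omega
  · have := hG.compl.card_edgeFinset_lt h3
    rw [Fintype.card_fin] at this
    split_ifs at hsum this <;> omega

/-- For `n ≥ 5` and `g(n) = 2(n+1)` if `4 ∣ n`, `g(n) = 2n` otherwise: every weighting
`f : E(K_n) → {-1,1}` with `|∑ f| ≤ C(n,2) - g(n)` has a zero-sum copy of `K_4`. -/
theorem zero_sum_K4_of_bounded_sum (n : ℕ) (hn : 5 ≤ n) (f : Finset (Fin n) → ℤ)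
    (hf : ∀ e ∈ Finset.powersetCard 2 (Finset.univ : Finset (Fin n)), f e = -1 ∨ f e = 1)
    (hsum : |∑ e ∈ Finset.powersetCard 2 (Finset.univ : Finset (Fin n)), f e| ≤
      (n.choose 2 : ℤ) - (if n % 4 = 0 then 2 * ((n : ℤ) + 1) else 2 * (n : ℤ))) :
    ∃ S ∈ Finset.powersetCard 4 (Finset.univ : Finset (Fin n)),
      (∑ e ∈ Finset.powersetCard 2 S, f e) = 0 :=
  zero_sum_K4_of_bounded_sum_general n f hf hsum
end

section
/- There are infinitely many positive integers n for which there exists a weighting f: E(K_n) → {-2, -1, 0, 1, 2} with ∑_{e ∈ E(K_n)} f(e) = 0 such that no 4-element subset of the vertices has edge weights summing to 0 (i.e., f is zero-sum-K_4 free). -/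
/-!
Split the `n = a + b` vertices into parts `A`, `B` of sizes `a`, `b`, and give weight `1` to the
edges inside a part and `-2` to the edges across. A set of `i` vertices of `A` and `j` of `B`
then has weight `3 (C(i,2) + C(j,2)) - 2 C(i+j,2)`. For `i + j = 4` this is `6 - 3ij ≠ 0`,
since `ij ∈ {0, 3, 4}`, and the whole graph has weight `0` exactly when
`a² + b² = 4ab + a + b`. This equation has infinitely many solutions by Vieta jumping:
`(a, b) ↦ (b, 4b + 1 - a)`, starting from `(1, 5)`.
-/

open Finset

section BipartiteWeight

variable {V : Type*} [DecidableEq V]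

def bipartiteWeight (A e : Finset V) : ℤ :=
  if e ⊆ A ∨ Disjoint e A then 1 else -2

lemma bipartiteWeight_mem (A e : Finset V) :
    bipartiteWeight A e ∈ ({-2, -1, 0, 1, 2} : Set ℤ) := by
  unfold bipartiteWeight
  split_ifs <;> simp

lemma card_filter_subset_or_disjoint (S A : Finset V) {k : ℕ} (hk : k ≠ 0) :
    #{e ∈ S.powersetCard k | e ⊆ A ∨ Disjoint e A} =
      (#(S ∩ A)).choose k + (#(S \ A)).choose k := by
  have hA : {e ∈ S.powersetCard k | e ⊆ A} = (S ∩ A).powersetCard k := by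
    ext e
    simp only [mem_filter, mem_powersetCard, subset_inter_iff]
    tauto
  have hB : {e ∈ S.powersetCard k | Disjoint e A} = (S \ A).powersetCard k := by
    ext e
    simp only [mem_filter, mem_powersetCard, subset_sdiff]
    tauto
  have hdisj : Disjoint ((S ∩ A).powersetCard k) ((S \ A).powersetCard k) := by
    refine disjoint_left.2 fun e heA heB => ?_
    rw [mem_powersetCard] at heA heB
    have he : e = ∅ :=
      disjoint_self.1 ((disjoint_sdiff_inter S A).symm.mono heA.1 heB.1)
    exact hk (by rw [← heA.2, he, card_empty])
  rw [filter_or, hA, hB, card_union_of_disjoint hdisj, card_powersetCard, card_powersetCard]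

lemma sum_bipartiteWeight (S A : Finset V) :
    ∑ e ∈ S.powersetCard 2, bipartiteWeight A e =
      3 * ((#(S ∩ A)).choose 2 + (#(S \ A)).choose 2 : ℕ) - 2 * (#S).choose 2 := by
  have hsplit := card_filter_add_card_filter_not (s := S.powersetCard 2)
    (p := fun e => e ⊆ A ∨ Disjoint e A)
  rw [card_powersetCard, card_filter_subset_or_disjoint S A two_ne_zero] at hsplit
  simp only [bipartiteWeight, sum_ite, sum_const, card_filter_subset_or_disjoint S A two_ne_zero,
    nsmul_eq_mul, mul_one, mul_neg]
  rw [← hsplit]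
  push_cast
  ring

lemma sum_bipartiteWeight_ne_zero_of_card_eq_four {S : Finset V} (hS : #S = 4) (A : Finset V) :
    ∑ e ∈ S.powersetCard 2, bipartiteWeight A e ≠ 0 := by
  have hij : #(S ∩ A) + #(S \ A) = 4 := by rw [card_inter_add_card_sdiff, hS]
  have hmono : ∀ i ≤ 4, i.choose 2 + (4 - i).choose 2 ≠ 4 := by decide
  have hne := hmono _ (hij ▸ Nat.le_add_right _ _)
  rw [show 4 - #(S ∩ A) = #(S \ A) by omega] at hne
  rw [sum_bipartiteWeight, hS, show (4 : ℕ).choose 2 = 6 from rfl]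
  omega

lemma sum_bipartiteWeight_univ_eq_zero [Fintype V] (A : Finset V)
    (h : #A ^ 2 + #Aᶜ ^ 2 = 4 * #A * #Aᶜ + #A + #Aᶜ) :
    ∑ e ∈ (univ : Finset V).powersetCard 2, bipartiteWeight A e = 0 := by
  have hcard : #(univ : Finset V) = #A + #Aᶜ := (card_add_card_compl A).symm
  rw [sum_bipartiteWeight, univ_inter, ← compl_eq_univ_sdiff, hcard]
  have hq : (3 * ((#A).choose 2 + (#Aᶜ).choose 2 : ℕ) - 2 * (#A + #Aᶜ).choose 2 : ℚ) = 0 := by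
    simp only [Nat.cast_add, Nat.cast_choose_two]
    linear_combination (1 / 2 : ℚ) * (by exact_mod_cast h :
      ((#A : ℚ) ^ 2 + #Aᶜ ^ 2 = 4 * #A * #Aᶜ + #A + #Aᶜ))
  exact_mod_cast hq

end BipartiteWeight

lemma exists_balanced_K4_free_weighting {a b : ℕ} (h : a ^ 2 + b ^ 2 = 4 * a * b + a + b) :
    ∃ f : Finset (Fin (a + b)) → ℤ,
      (∀ e ∈ powersetCard 2 (univ : Finset (Fin (a + b))), f e ∈ ({-2, -1, 0, 1, 2} : Set ℤ)) ∧
      (∑ e ∈ powersetCard 2 (univ : Finset (Fin (a + b))), f e) = 0 ∧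
      (∀ S ∈ powersetCard 4 (univ : Finset (Fin (a + b))), (∑ e ∈ powersetCard 2 S, f e) ≠ 0) := by
  set A : Finset (Fin (a + b)) := univ.map (Fin.castAddEmb b)
  have hA : #A = a := by simp [A]
  have hAc : #Aᶜ = b := by rw [card_compl, hA, Fintype.card_fin, Nat.add_sub_cancel_left]
  refine ⟨bipartiteWeight A, fun e _ => bipartiteWeight_mem A e, ?_, fun S hS => ?_⟩
  · exact sum_bipartiteWeight_univ_eq_zero A (by rwa [hA, hAc])
  · exact sum_bipartiteWeight_ne_zero_of_card_eq_four (mem_powersetCard.1 hS).2 A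

lemma vieta_step {a b : ℕ} (h : a ^ 2 + b ^ 2 = 4 * a * b + a + b) (hab : a ≤ b) :
    b ^ 2 + (4 * b + 1 - a) ^ 2 = 4 * b * (4 * b + 1 - a) + b + (4 * b + 1 - a) := by
  obtain ⟨c, hc⟩ : ∃ c, 4 * b + 1 = a + c := ⟨4 * b + 1 - a, by omega⟩
  rw [hc, Nat.add_sub_cancel_left]
  zify at h hc ⊢
  linear_combination h + ((a : ℤ) - c) * hc

lemma exists_vieta_solution_gt (m : ℕ) :
    ∃ a b : ℕ, a ≤ b ∧ a ^ 2 + b ^ 2 = 4 * a * b + a + b ∧ m < b := by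
  induction m with
  | zero => exact ⟨1, 5, by norm_num⟩
  | succ m ih =>
    obtain ⟨a, b, hab, h, hm⟩ := ih
    exact ⟨b, 4 * b + 1 - a, by omega, vieta_step h hab, by omega⟩

/-- There are infinitely many positive integers `n` admitting a weighting
`f : E(K_n) → {-2,-1,0,1,2}` with total sum `0` and no zero-sum copy of `K_4`. -/
theorem zero_sum_K4_free_wide_range_exists :
    {n : ℕ | 0 < n ∧ ∃ f : Finset (Fin n) → ℤ,
      (∀ e ∈ Finset.powersetCard 2 (Finset.univ : Finset (Fin n)),
        f e ∈ ({-2, -1, 0, 1, 2} : Set ℤ)) ∧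
      (∑ e ∈ Finset.powersetCard 2 (Finset.univ : Finset (Fin n)), f e) = 0 ∧
      (∀ S ∈ Finset.powersetCard 4 (Finset.univ : Finset (Fin n)),
        (∑ e ∈ Finset.powersetCard 2 S, f e) ≠ 0)}.Infinite := by
  refine Set.infinite_of_forall_exists_gt fun m => ?_
  obtain ⟨a, b, -, h, hm⟩ := exists_vieta_solution_gt m
  exact ⟨a + b, ⟨by omega, exists_balanced_K4_free_weighting h⟩, by omega⟩
end

section
/- Let f: E(K_n) → {-1, 1} be a weighting and let G_{-1} be the graph on the vertex set of K_n whose edges are exactly the edges e with f(e) = -1. Then f is zero-sum-K_4 free (no 4-element vertex subset has edge weights summing to 0) if and only if G_{-1} contains no induced subgraph on 4 vertices isomorphic to the star K_{1,3}, the disjoint union K_3 ∪ K_1 of a triangle and an isolated vertex, or the path P_3 with 3 edges. -/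
/-!
Since every edge weighs `±1`, a `4`-set spanning `k` edges of weight `-1` has weight `6 - 2k`; it
is zero-sum exactly when it spans three edges of `G`. Up to isomorphism the graphs on four vertices
with three edges are `K_{1,3}`, `K₃ ∪ K₁` and `P₃`, which is checked by exhausting the twenty
three-edge subsets of `K₄` up to relabelling.
-/

open Finset SimpleGraph

theorem Finset.sum_eq_card_sub_two_mul_card_filter_eq_neg_one {ι : Type*} {s : Finset ι}
    {g : ι → ℤ} (hg : ∀ x ∈ s, g x = -1 ∨ g x = 1) :
    ∑ x ∈ s, g x = #s - 2 * #{x ∈ s | g x = -1} := by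
  have hg' : ∀ x ∈ s, g x = 1 - 2 * if g x = -1 then 1 else 0 := fun x hx => by
    rcases hg x hx with h | h <;> simp [h]
  rw [sum_congr rfl hg', sum_sub_distrib, ← mul_sum, sum_boole]
  simp

namespace SimpleGraph

variable {V W : Type*}

instance : DecidableRel (completeBipartiteGraph V W).Adj := fun v w =>
  inferInstanceAs (Decidable (v.isLeft ∧ w.isRight ∨ v.isRight ∧ w.isLeft))

instance {G : SimpleGraph V} {H : SimpleGraph W} [DecidableRel G.Adj] [DecidableRel H.Adj] :
    DecidableRel (G ⊕g H).Adj
  | .inl _, .inl _ => inferInstanceAs (Decidable (G.Adj _ _))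
  | .inr _, .inr _ => inferInstanceAs (Decidable (H.Adj _ _))
  | .inl _, .inr _ => inferInstanceAs (Decidable (false = true))
  | .inr _, .inl _ => inferInstanceAs (Decidable (false = true))

instance (n : ℕ) : DecidableRel (pathGraph n).Adj := fun _ _ => decidable_of_iff' _ pathGraph_adj

theorem card_edgeFinset_induce_eq_card_filter_isClique [Fintype V] [DecidableEq V]
    (G : SimpleGraph V) [DecidableRel G.Adj] (S : Finset V) :
    #(G.induce ↑S).edgeFinset =
      #((S.powersetCard 2).filter fun e : Finset V => G.IsClique (e : Set V)) := by
  rw [← card_filter_edgeFinset_toFinset_subset]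
  refine card_bij (fun z _ => z.toFinset) ?_ ?_ ?_
  · intro z hz
    induction z using Sym2.ind with
    | h u v =>
      simp only [mem_filter, mem_edgeFinset, mem_edgeSet, Sym2.toFinset_mk_eq] at hz
      simp only [mem_filter, mem_powersetCard, Sym2.toFinset_mk_eq, coe_pair, isClique_pair]
      exact ⟨⟨hz.2, card_pair hz.1.ne⟩, fun _ => hz.1⟩
  · intro z _ z' _ h
    induction z using Sym2.ind
    induction z' using Sym2.ind
    rw [Sym2.toFinset_mk_eq, Sym2.toFinset_mk_eq, ← coe_inj, coe_pair, coe_pair] at h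
    exact Sym2.eq_iff.2 (Set.pair_eq_pair_iff.1 h)
  · intro e he
    obtain ⟨⟨hS, he2⟩, hcl⟩ := by simpa only [mem_filter, mem_powersetCard] using he
    obtain ⟨u, v, huv, rfl⟩ := card_eq_two.1 he2
    rw [coe_pair, isClique_pair] at hcl
    exact ⟨s(u, v), by simpa [Sym2.toFinset_mk_eq] using ⟨hcl huv, hS⟩, Sym2.toFinset_mk_eq⟩

theorem exists_perm_map_edgeFinset_eq_of_mem_powersetCard_three {E : Finset (Sym2 (Fin 4))}
    (hE : E ∈ (⊤ : SimpleGraph (Fin 4)).edgeFinset.powersetCard 3) : ∃ σ : Equiv.Perm (Fin 4),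
      E.map σ.toEmbedding.sym2Map =
          ((completeBipartiteGraph (Fin 1) (Fin 3)).map finSumFinEquiv).edgeFinset ∨
        E.map σ.toEmbedding.sym2Map =
          (((⊤ : SimpleGraph (Fin 3)) ⊕g (⊥ : SimpleGraph (Fin 1))).map finSumFinEquiv).edgeFinset ∨
        E.map σ.toEmbedding.sym2Map = (pathGraph 4).edgeFinset := by
  revert E
  decide +kernel

theorem nonempty_iso_of_card_edgeFinset_eq_three [Fintype W] [DecidableEq W]
    (hW : Fintype.card W = 4) (H : SimpleGraph W) [DecidableRel H.Adj] (h : #H.edgeFinset = 3) :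
    Nonempty (completeBipartiteGraph (Fin 1) (Fin 3) ≃g H) ∨
      Nonempty (((⊤ : SimpleGraph (Fin 3)) ⊕g (⊥ : SimpleGraph (Fin 1))) ≃g H) ∨
      Nonempty (pathGraph 4 ≃g H) := by
  classical
  let e := Fintype.equivFinOfCardEq hW
  have hE : (H.map e).edgeFinset ∈ (⊤ : SimpleGraph (Fin 4)).edgeFinset.powersetCard 3 :=
    mem_powersetCard.2 ⟨edgeFinset_subset_edgeFinset.2 le_top,
      by rw [← (Iso.map e H).card_edgeFinset_eq, h]⟩
  obtain ⟨σ, hσ⟩ := exists_perm_map_edgeFinset_eq_of_mem_powersetCard_three hE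
  simp only [← edgeFinset_map, edgeFinset_inj, Equiv.coe_toEmbedding] at hσ
  have hH : H ≃g (H.map e).map σ := (Iso.map e H).trans (Iso.map σ _)
  rcases hσ with hσ | hσ | hσ <;> rw [hσ] at hH
  · exact Or.inl ⟨(Iso.map _ _).trans hH.symm⟩
  · exact Or.inr (Or.inl ⟨(Iso.map _ _).trans hH.symm⟩)
  · exact Or.inr (Or.inr ⟨hH.symm⟩)

theorem IsIndContained.exists_card_eq_nonempty_iso_induce [Fintype W] {K : SimpleGraph W}
    {G : SimpleGraph V} (h : K ⊴ G) :
    ∃ S : Finset V, #S = Fintype.card W ∧ Nonempty (K ≃g G.induce ↑S) := by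
  obtain ⟨s, ⟨i⟩⟩ := isIndContained_iff_exists_iso_induce.1 h
  have : Finite s := Finite.of_equiv W i.toEquiv
  obtain ⟨S, rfl⟩ := s.toFinite.exists_finset_coe
  exact ⟨S, by simp [Fintype.card_congr i.toEquiv], ⟨i⟩⟩

theorem exists_card_edgeFinset_induce_eq_three_iff [DecidableEq V] (G : SimpleGraph V)
    [DecidableRel G.Adj] :
    (∃ S : Finset V, #S = 4 ∧ #(G.induce ↑S).edgeFinset = 3) ↔
      completeBipartiteGraph (Fin 1) (Fin 3) ⊴ G ∨
        ((⊤ : SimpleGraph (Fin 3)) ⊕g (⊥ : SimpleGraph (Fin 1))) ⊴ G ∨ pathGraph 4 ⊴ G := by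
  constructor
  · rintro ⟨S, hS, h⟩
    refine (nonempty_iso_of_card_edgeFinset_eq_three (by simpa using hS) _ h).imp ?_
      (Or.imp ?_ ?_) <;>
    exact fun hi => isIndContained_iff_exists_iso_induce.2 ⟨_, hi⟩
  · rintro (h | h | h) <;> obtain ⟨S, hS, ⟨i⟩⟩ := h.exists_card_eq_nonempty_iso_induce <;>
      exact ⟨S, by simpa using hS, by rw [← i.card_edgeFinset_eq]; decide⟩

end SimpleGraph

/-- A weighting `f : E(K_n) → {-1,1}` is zero-sum-`K₄` free if and only if the graph `G₋₁`
of `(-1)`-edges has no induced subgraph isomorphic to `K_{1,3}`, `K₃ ∪ K₁` or `P₃`. -/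
theorem zero_sum_K4_free_iff_induced_free (n : ℕ) (f : Finset (Fin n) → ℤ)
    (hf : ∀ e ∈ Finset.powersetCard 2 (Finset.univ : Finset (Fin n)), f e = -1 ∨ f e = 1)
    (G : SimpleGraph (Fin n))
    (hG : ∀ u v : Fin n, G.Adj u v ↔ u ≠ v ∧ f ({u, v} : Finset (Fin n)) = -1) :
    (∀ S ∈ Finset.powersetCard 4 (Finset.univ : Finset (Fin n)),
        (∑ e ∈ Finset.powersetCard 2 S, f e) ≠ 0) ↔
    (¬ Nonempty (completeBipartiteGraph (Fin 1) (Fin 3) ↪g G) ∧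
     ¬ Nonempty (((⊤ : SimpleGraph (Fin 3)) ⊕g (⊥ : SimpleGraph (Fin 1))) ↪g G) ∧
     ¬ Nonempty (SimpleGraph.pathGraph 4 ↪g G)) := by
  classical
  have hneg_one_eq_clique (S : Finset (Fin n)) :
      {e ∈ S.powersetCard 2 | f e = -1} =
        (S.powersetCard 2).filter fun e : Finset (Fin n) => G.IsClique (e : Set (Fin n)) := by
    refine filter_congr fun e he => ?_
    obtain ⟨u, v, huv, rfl⟩ := card_eq_two.1 (mem_powersetCard.1 he).2
    rw [coe_pair, isClique_pair, hG]
    tauto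
  have hzero_iff {S : Finset (Fin n)} (hS : #S = 4) :
      ∑ e ∈ S.powersetCard 2, f e = 0 ↔ #(G.induce ↑S).edgeFinset = 3 := by
    have hpm : ∀ e ∈ S.powersetCard 2, f e = -1 ∨ f e = 1 :=
      fun e he => hf e (powersetCard_mono (subset_univ S) he)
    rw [sum_eq_card_sub_two_mul_card_filter_eq_neg_one hpm, card_powersetCard, hS,
      show Nat.choose 4 2 = 6 from rfl, hneg_one_eq_clique,
      card_edgeFinset_induce_eq_card_filter_isClique]
    omega
  calc _ ↔ ¬ ∃ S : Finset (Fin n), #S = 4 ∧ #(G.induce ↑S).edgeFinset = 3 := by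
        simp +contextual [mem_powersetCard, hzero_iff]
    _ ↔ _ := by
        rw [exists_card_edgeFinset_induce_eq_three_iff]
        simp only [IsIndContained, not_or]
end

section
/- Let h(n) = n+1 if n ≡ 0 (mod 4) and h(n) = n otherwise. If G is a graph on n vertices that is triangle-free, contains no induced subgraph isomorphic to the star K_{1,3}, and contains no induced subgraph isomorphic to the path P_3 with 3 edges, then G has at most h(n) − 1 edges. -/
/-!
A triangle-free graph without induced `K_{1,3}` has maximum degree at most `2`, hence at most `n`
edges, with equality only if it is `2`-regular. In a `2`-regular triangle-free graph without
induced `P₃`, the two neighbours of a vertex `v` have a second common neighbour `c` (otherwise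
`c - a - v - b` is an induced `P₃`), so every component is a `4`-cycle. The closed balls of
radius two are exactly these components, and they split the vertex set into blocks of four.
-/

open Finset

theorem dvd_card_of_card_blocks_eq {α : Type*} [Fintype α] [DecidableEq α] {B : α → Finset α}
    {k : ℕ} (hB : ∀ a, a ∈ B a ∧ #(B a) = k ∧ ∀ b ∈ B a, B b = B a) : k ∣ Fintype.card α := by
  have hfiber : ∀ s ∈ univ.image B, #{a | B a = s} = k := by
    rintro s hs
    obtain ⟨a, -, rfl⟩ := mem_image.mp hs
    rw [← (hB a).2.1]
    congr 1
    ext b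
    simp only [mem_filter, mem_univ, true_and]
    exact ⟨fun h => h ▸ (hB b).1, (hB a).2.2 b⟩
  rw [← card_univ, card_eq_sum_card_image B, sum_congr rfl hfiber, sum_const, smul_eq_mul]
  exact dvd_mul_left k _

namespace SimpleGraph

variable {V : Type*} {G : SimpleGraph V}

lemma nonempty_star_embedding_of_isIndepSet {v : V} {t : Finset V} {k : ℕ} (ht : #t = k)
    (hadj : ∀ u ∈ t, G.Adj v u) (hind : G.IsIndepSet t) :
    Nonempty (completeBipartiteGraph (Fin 1) (Fin k) ↪g G) := by
  let e := (t.equivFinOfCardEq ht).symm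
  let f : Fin 1 ⊕ Fin k → V := Sum.elim (fun _ => v) (fun i => e i)
  have hne : ∀ i, v ≠ e i := fun i => (hadj _ (e i).2).ne
  have hf : Function.Injective f := by
    rintro (i | i) (j | j) h
    · exact congrArg _ (Subsingleton.elim i j)
    · exact absurd h (hne j)
    · exact absurd h.symm (hne i)
    · exact congrArg _ (e.injective (Subtype.val_injective h))
  refine ⟨⟨⟨f, hf⟩, ?_⟩⟩
  rintro (i | i) (j | j) <;> simp only [Function.Embedding.coeFn_mk, f]
  · simp
  · simpa using hadj _ (e j).2
  · simpa using (hadj _ (e i).2).symm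
  · simpa using fun h : G.Adj (e i) (e j) => hind (e i).2 (e j).2 h.ne h

lemma nonempty_pathGraph_four_embedding {w x y z : V} (hwx : G.Adj w x) (hxy : G.Adj x y)
    (hyz : G.Adj y z) (hwy : ¬ G.Adj w y) (hwz : ¬ G.Adj w z) (hxz : ¬ G.Adj x z) :
    Nonempty (pathGraph 4 ↪g G) := by
  have hwy' : w ≠ y := by rintro rfl; exact hwz hyz
  have hwz' : w ≠ z := by rintro rfl; exact hwy hyz.symm
  have hxz' : x ≠ z := by rintro rfl; exact hwz hwx
  have hf : Function.Injective ![w, x, y, z] := by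
    intro i j h
    fin_cases i <;> fin_cases j <;>
      simp_all [hwx.ne, hxy.ne, hyz.ne, hwx.ne', hxy.ne', hyz.ne', hwy'.symm, hwz'.symm, hxz'.symm]
  refine ⟨⟨⟨_, hf⟩, fun {i j} => ?_⟩⟩
  simp only [Function.Embedding.coeFn_mk]
  fin_cases i <;> fin_cases j <;>
    simp [pathGraph_adj, hwx, hxy, hyz, hwx.symm, hxy.symm, hyz.symm, hwy, hwz, hxz,
      G.adj_comm y w, G.adj_comm z w, G.adj_comm z x]

lemma CliqueFree.degree_lt_of_not_nonempty_star {k : ℕ} (h3 : G.CliqueFree 3)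
    (hstar : ¬ Nonempty (completeBipartiteGraph (Fin 1) (Fin k) ↪g G)) (v : V)
    [Fintype (G.neighborSet v)] : G.degree v < k := by
  by_contra! hk
  obtain ⟨t, hsub, ht⟩ := exists_subset_card_eq (s := G.neighborFinset v) hk
  exact hstar <| nonempty_star_embedding_of_isIndepSet ht
    (fun u hu => (G.mem_neighborFinset v u).mp (hsub hu))
    ((G.isIndepSet_neighborSet_of_triangleFree h3 v).mono (by simpa [← coe_subset] using hsub))

section Finite

variable (G) [Fintype V] [DecidableRel G.Adj] [Fintype G.edgeSet] {k : ℕ}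

lemma two_mul_card_edgeFinset_le_of_degree_le (h : ∀ v, G.degree v ≤ k) :
    2 * #G.edgeFinset ≤ k * Fintype.card V := by
  calc 2 * #G.edgeFinset = ∑ v, G.degree v := by
        rw [G.sum_degrees_eq_twice_card_edges]; congr!
    _ ≤ ∑ _v : V, k := sum_le_sum fun v _ => h v
    _ = k * Fintype.card V := by rw [sum_const, card_univ, smul_eq_mul, mul_comm]

lemma two_mul_card_edgeFinset_lt_of_not_isRegularOfDegree (h : ∀ v, G.degree v ≤ k)
    (hreg : ¬ G.IsRegularOfDegree k) : 2 * #G.edgeFinset < k * Fintype.card V := by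
  obtain ⟨v, hv⟩ := not_forall.mp hreg
  calc 2 * #G.edgeFinset = ∑ v, G.degree v := by
        rw [G.sum_degrees_eq_twice_card_edges]; congr!
    _ < ∑ _v : V, k := sum_lt_sum (fun v _ => h v) ⟨v, mem_univ v, (h v).lt_of_ne hv⟩
    _ = k * Fintype.card V := by rw [sum_const, card_univ, smul_eq_mul, mul_comm]

end Finite

variable [DecidableEq V] [LocallyFinite G]

lemma IsRegularOfDegree.neighborFinset_eq_pair (hreg : G.IsRegularOfDegree 2) {x p q : V}
    (hp : G.Adj x p) (hq : G.Adj x q) (hpq : p ≠ q) : G.neighborFinset x = {p, q} := by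
  refine (eq_of_subset_of_card_le ?_ ?_).symm
  · simp [insert_subset_iff, hp, hq]
  · rw [card_pair hpq, card_neighborFinset_eq_degree, hreg.degree_eq]

lemma IsRegularOfDegree.exists_neighborFinset_eq_pair (hreg : G.IsRegularOfDegree 2) {x p : V}
    (hp : G.Adj x p) : ∃ q, p ≠ q ∧ G.neighborFinset x = {p, q} := by
  obtain ⟨a, b, hab, hN⟩ :=
    card_eq_two.mp ((G.card_neighborFinset_eq_degree x).trans (hreg.degree_eq x))
  have hp' : p ∈ ({a, b} : Finset V) := hN ▸ (G.mem_neighborFinset x p).mpr hp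
  rw [mem_insert, mem_singleton] at hp'
  rcases hp' with rfl | rfl
  · exact ⟨b, hab, hN⟩
  · exact ⟨a, hab.symm, hN.trans (pair_comm a p)⟩

lemma IsRegularOfDegree.exists_isolated_four_cycle (hreg : G.IsRegularOfDegree 2)
    (h3 : G.CliqueFree 3) (hpath : ¬ Nonempty (pathGraph 4 ↪g G)) (v : V) :
    ∃ a b c, a ≠ b ∧ v ≠ c ∧ G.neighborFinset v = {a, b} ∧ G.neighborFinset a = {v, c} ∧
      G.neighborFinset b = {v, c} ∧ G.neighborFinset c = {a, b} := by
  obtain ⟨a, b, hab, hNv⟩ :=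
    card_eq_two.mp ((G.card_neighborFinset_eq_degree v).trans (hreg.degree_eq v))
  have hva : G.Adj v a := by simp [← mem_neighborFinset, hNv]
  have hvb : G.Adj v b := by simp [← mem_neighborFinset, hNv]
  obtain ⟨c, hvc, hNa⟩ := hreg.exists_neighborFinset_eq_pair hva.symm
  have hac : G.Adj a c := by simp [← mem_neighborFinset, hNa]
  have hab' : ¬ G.Adj a b := G.isIndepSet_neighborSet_of_triangleFree h3 v hva hvb hab
  have hvc' : ¬ G.Adj v c := G.isIndepSet_neighborSet_of_triangleFree h3 a hva.symm hac hvc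
  have hbc : G.Adj b c := by
    by_contra hbc
    exact hpath <| nonempty_pathGraph_four_embedding hac.symm hva.symm hvb
      (fun h => hvc' h.symm) (fun h => hbc h.symm) hab'
  exact ⟨a, b, c, hab, hvc, hNv, hNa, hreg.neighborFinset_eq_pair hvb.symm hbc hvc,
    hreg.neighborFinset_eq_pair hac.symm hbc.symm hab⟩

def closedTwoBall (v : V) : Finset V :=
  insert v (G.neighborFinset v ∪ (G.neighborFinset v).biUnion fun w => G.neighborFinset w)

lemma closedTwoBall_eq {x p q r : V} (hx : G.neighborFinset x = {p, q})
    (hp : G.neighborFinset p = {x, r}) (hq : G.neighborFinset q = {x, r}) :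
    G.closedTwoBall x = {x, p, q, r} := by
  rw [closedTwoBall, hx, biUnion_insert, singleton_biUnion, hp, hq]
  ext
  simp only [mem_insert, mem_union, mem_singleton]
  tauto

theorem IsRegularOfDegree.four_dvd_card [Fintype V] (hreg : G.IsRegularOfDegree 2)
    (h3 : G.CliqueFree 3) (hpath : ¬ Nonempty (pathGraph 4 ↪g G)) : 4 ∣ Fintype.card V := by
  refine dvd_card_of_card_blocks_eq (B := G.closedTwoBall) fun v => ?_
  obtain ⟨a, b, c, hab, hvc, hNv, hNa, hNb, hNc⟩ := hreg.exists_isolated_four_cycle h3 hpath v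
  have hva : G.Adj v a := by simp [← mem_neighborFinset, hNv]
  have hvb : G.Adj v b := by simp [← mem_neighborFinset, hNv]
  have hac : G.Adj a c := by simp [← mem_neighborFinset, hNa]
  have hbc : G.Adj b c := by simp [← mem_neighborFinset, hNb]
  have hv : G.closedTwoBall v = {v, a, b, c} := closedTwoBall_eq hNv hNa hNb
  have hblock : ∀ u ∈ ({v, a, b, c} : Finset V), G.closedTwoBall u = {v, a, b, c} := by
    simp only [mem_insert, mem_singleton]
    rintro u (rfl | rfl | rfl | rfl)
    · exact hv
    · rw [closedTwoBall_eq hNa hNv hNc]; ext; simp only [mem_insert, mem_singleton]; tauto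
    · rw [closedTwoBall_eq hNb (hNv.trans (pair_comm _ _)) (hNc.trans (pair_comm _ _))]
      ext; simp only [mem_insert, mem_singleton]; tauto
    · rw [closedTwoBall_eq hNc (hNa.trans (pair_comm _ _)) (hNb.trans (pair_comm _ _))]
      ext; simp only [mem_insert, mem_singleton]; tauto
  rw [hv]
  refine ⟨mem_insert_self _ _, ?_, hblock⟩
  rw [card_insert_of_notMem (by simp [hva.ne, hvb.ne, hvc]),
    card_insert_of_notMem (by simp [hab, hac.ne]), card_pair hbc.ne]

end SimpleGraph

/-- If `G` is a triangle-free graph on `n` vertices with no induced `K_{1,3}` and no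
induced `P₃`, then `G` has at most `h(n) - 1` edges, where `h(n) = n+1` if `4 ∣ n` and
`h(n) = n` otherwise. -/
theorem edge_bound_of_K13_K3_P3_free (n : ℕ) (G : SimpleGraph (Fin n))
    [Fintype G.edgeSet]
    (htriangle : G.CliqueFree 3)
    (hstar : ¬ Nonempty (completeBipartiteGraph (Fin 1) (Fin 3) ↪g G))
    (hpath : ¬ Nonempty (SimpleGraph.pathGraph 4 ↪g G)) :
    G.edgeFinset.card ≤ (if n % 4 = 0 then n + 1 else n) - 1 := by
  classical
  have hdeg : ∀ v, G.degree v ≤ 2 := fun v =>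
    Nat.le_of_lt_succ (htriangle.degree_lt_of_not_nonempty_star hstar v)
  by_cases hreg : G.IsRegularOfDegree 2
  · have h4 : 4 ∣ n := by simpa using hreg.four_dvd_card htriangle hpath
    have hle := G.two_mul_card_edgeFinset_le_of_degree_le hdeg
    rw [Fintype.card_fin] at hle
    split_ifs <;> omega
  · have hlt := G.two_mul_card_edgeFinset_lt_of_not_isRegularOfDegree hdeg hreg
    rw [Fintype.card_fin] at hlt
    split_ifs <;> omega
end

section
/- Let h(n) = n+1 if n ≡ 0 (mod 4) and h(n) = n otherwise, and let G be a graph on n vertices that is triangle-free, contains no induced subgraph isomorphic to the star K_{1,3}, and contains no induced subgraph isomorphic to the path P_3 with 3 edges. Then G has exactly h(n) − 1 edges if and only if G is isomorphic to the disjoint union J ∪ C_4 ∪ … ∪ C_4 of ⌊n/4⌋ copies of the 4-cycle C_4 together with a graph J that is empty, a single vertex K_1, a single edge K_2, or a path P_2 with 2 edges. -/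
/-!
Triangle- and claw-freeness bound every degree by `2`, so each component of `G` is a path or a
cycle, and an induced `P₃` leaves only the components `K₁`, `K₂`, `P₂` and `C₄`. Hence `G` has
`n - p` edges, where `p` is the number of path components. If `4 ∣ n` this is at most `n`, with
equality iff `p = 0`; otherwise `p ≥ 1`, and equality means `p = 1`, the single path having
`n % 4` vertices. The bound and its equality case are proved together, peeling off one component
at a time.
-/

open Function

universe u

namespace SimpleGraph

variable {V W : Type*} {G : SimpleGraph V} {H : SimpleGraph W}

def Iso.sumOfIsEmpty [IsEmpty W] (G : SimpleGraph V) (H : SimpleGraph W) : G ⊕g H ≃g G where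
  toEquiv := Equiv.sumEmpty V W
  map_rel_iff' := by
    rintro (a | a) (b | b) <;> first | exact isEmptyElim a | exact isEmptyElim b | simp

theorem natCard_edgeSet_sum [Finite V] [Finite W] (G : SimpleGraph V) (H : SimpleGraph W) :
    Nat.card (G ⊕g H).edgeSet = Nat.card G.edgeSet + Nat.card H.edgeSet := by
  rw [Nat.card_congr edgeSetSumEquiv, Nat.card_sum]

def Embedding.ofAdjIff (f : W → V) (hf : Injective f)
    (h : ∀ x y, G.Adj (f x) (f y) ↔ H.Adj x y) : H ↪g G :=
  ⟨⟨f, hf⟩, h _ _⟩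

def IsAdjClosed (f : H ↪g G) : Prop := ∀ w v, G.Adj (f w) v → v ∈ Set.range f

noncomputable def Iso.sumInduceCompl (f : H ↪g G) (hf : IsAdjClosed f) :
    H ⊕g G.induce (Set.range f)ᶜ ≃g G where
  toEquiv := by
    classical
    exact ((Equiv.ofInjective f f.injective).sumCongr (Equiv.refl _)).trans
      (Equiv.Set.sumCompl _)
  map_rel_iff' := by
    rintro (a | a) (b | b)
    · simp
    · simpa using fun h => b.2 (hf a _ h)
    · simpa using fun h => a.2 (hf b _ h.symm)
    · simp

variable {v a b c d : V}

theorem CliqueFree.not_adj_of_adj_of_adj_s7 (h : G.CliqueFree 3) (hab : G.Adj a b)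
    (hac : G.Adj a c) : ¬ G.Adj b c := fun hbc =>
  isIndepSet_neighborSet_of_triangleFree G h a hab hac hbc.ne hbc

theorem exists_isAdjClosed_pathGraph_one (hv : ∀ y, ¬ G.Adj v y) :
    ∃ f : pathGraph 1 ↪g G, IsAdjClosed f :=
  ⟨Embedding.ofAdjIff (fun _ => v) (fun _ _ _ => Subsingleton.elim _ _)
    (fun x y => by rw [Subsingleton.elim x y]; simp), fun _ y h => (hv y h).elim⟩

theorem exists_isAdjClosed_pathGraph_two (hab : G.Adj a b) (ha : ∀ y, G.Adj a y → y = b)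
    (hb : ∀ y, G.Adj b y → y = a) : ∃ f : pathGraph 2 ↪g G, IsAdjClosed f := by
  refine ⟨Embedding.ofAdjIff ![a, b] ?_ ?_, ?_⟩
  · intro x y hxy
    fin_cases x <;> fin_cases y <;> simp_all [hab.ne, hab.ne.symm]
  · intro x y
    fin_cases x <;> fin_cases y <;> simp [pathGraph_two_eq_top, hab, hab.symm]
  · intro x y hxy
    fin_cases x
    · exact ⟨1, (ha y hxy).symm⟩
    · exact ⟨0, (hb y hxy).symm⟩

structure IsTriangleClawP3Free (G : SimpleGraph V) : Prop where
  cliqueFree : G.CliqueFree 3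
  clawFree : ¬ Nonempty (completeBipartiteGraph (Fin 1) (Fin 3) ↪g G)
  p3Free : ¬ Nonempty (pathGraph 4 ↪g G)

namespace IsTriangleClawP3Free

theorem comap (hG : G.IsTriangleClawP3Free) (f : H ↪g G) : H.IsTriangleClawP3Free where
  cliqueFree := hG.cliqueFree.comap f.isContained
  clawFree := fun ⟨e⟩ => hG.clawFree ⟨f.comp e⟩
  p3Free := fun ⟨e⟩ => hG.p3Free ⟨f.comp e⟩

theorem eq_or_eq_of_adj (hG : G.IsTriangleClawP3Free) (ha : G.Adj v a) (hb : G.Adj v b)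
    (hab : a ≠ b) (hc : G.Adj v c) : c = a ∨ c = b := by
  by_contra! h
  have nab := hG.cliqueFree.not_adj_of_adj_of_adj_s7 ha hb
  have nac := hG.cliqueFree.not_adj_of_adj_of_adj_s7 ha hc
  have nbc := hG.cliqueFree.not_adj_of_adj_of_adj_s7 hb hc
  refine hG.clawFree ⟨Embedding.ofAdjIff (Sum.elim (fun _ => v) ![a, b, c]) ?_ ?_⟩
  · rintro (x | x) (y | y) hxy <;> fin_cases x <;> fin_cases y <;>
      simp_all [ha.ne, hb.ne, hc.ne, h.1.symm, h.2.symm, ha.ne.symm, hb.ne.symm, hc.ne.symm]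
  · rintro (x | x) (y | y) <;> fin_cases x <;> fin_cases y <;>
      simp [ha, hb, hc, ha.symm, hb.symm, hc.symm, nab, nac, nbc, mt G.adj_symm nab,
        mt G.adj_symm nac, mt G.adj_symm nbc]

theorem adj_of_adj_adj_adj (hG : G.IsTriangleClawP3Free) (hab : G.Adj a b) (hbc : G.Adj b c)
    (hcd : G.Adj c d) (hac : a ≠ c) (hbd : b ≠ d) (had : a ≠ d) : G.Adj a d := by
  by_contra nad
  have nac := hG.cliqueFree.not_adj_of_adj_of_adj_s7 hab.symm hbc
  have nbd := hG.cliqueFree.not_adj_of_adj_of_adj_s7 hbc.symm hcd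
  refine hG.p3Free ⟨Embedding.ofAdjIff ![a, b, c, d] ?_ ?_⟩
  · intro x y hxy
    fin_cases x <;> fin_cases y <;>
      simp_all [hab.ne, hbc.ne, hcd.ne, hab.ne.symm, hbc.ne.symm, hcd.ne.symm]
  · intro x y
    fin_cases x <;> fin_cases y <;>
      simp [pathGraph_adj, hab, hbc, hcd, hab.symm, hbc.symm, hcd.symm, nac, nbd, nad,
        mt G.adj_symm nac, mt G.adj_symm nbd, mt G.adj_symm nad]

theorem exists_isAdjClosed_pathGraph_three (hG : G.IsTriangleClawP3Free) (hab : G.Adj a b)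
    (ha : ∀ y, G.Adj a y → y = b) (hbc : G.Adj b c) (hca : c ≠ a) :
    ∃ f : pathGraph 3 ↪g G, IsAdjClosed f := by
  have nac : ¬ G.Adj a c := fun h => hbc.ne (ha c h).symm
  have hb : ∀ y, G.Adj b y → y = a ∨ y = c :=
    fun _ => hG.eq_or_eq_of_adj hab.symm hbc hca.symm
  have hc : ∀ y, G.Adj c y → y = b := by
    intro y hcy
    by_contra hyb
    have hya : y ≠ a := by rintro rfl; exact nac hcy.symm
    exact hyb (ha y (hG.adj_of_adj_adj_adj hab hbc hcy hca.symm (Ne.symm hyb) hya.symm))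
  refine ⟨Embedding.ofAdjIff ![a, b, c] ?_ ?_, ?_⟩
  · intro x y hxy
    fin_cases x <;> fin_cases y <;> simp_all [hab.ne, hbc.ne, hab.ne.symm, hbc.ne.symm]
  · intro x y
    fin_cases x <;> fin_cases y <;>
      simp [pathGraph_adj, hab, hbc, hab.symm, hbc.symm, nac, mt G.adj_symm nac]
  · intro x y hxy
    fin_cases x
    · exact ⟨1, (ha y hxy).symm⟩
    · rcases hb y hxy with rfl | rfl
      exacts [⟨0, rfl⟩, ⟨2, rfl⟩]
    · exact ⟨1, (hc y hxy).symm⟩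

theorem exists_isAdjClosed_cycleGraph_four (hG : G.IsTriangleClawP3Free)
    (hdeg : ∀ x, ∃ y z, G.Adj x y ∧ G.Adj x z ∧ y ≠ z) (v : V) :
    ∃ f : cycleGraph 4 ↪g G, IsAdjClosed f := by
  obtain ⟨a, b, ha, hb, hab⟩ := hdeg v
  obtain ⟨c, hac, hcv⟩ : ∃ c, G.Adj a c ∧ c ≠ v := by
    obtain ⟨y, z, hy, hz, hyz⟩ := hdeg a
    by_cases hyv : y = v
    · exact ⟨z, hz, hyv ▸ hyz.symm⟩
    · exact ⟨y, hy, hyv⟩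
  have nab := hG.cliqueFree.not_adj_of_adj_of_adj_s7 ha hb
  have nvc := hG.cliqueFree.not_adj_of_adj_of_adj_s7 ha.symm hac
  have hcb : c ≠ b := by rintro rfl; exact nab hac
  have hbc : G.Adj b c := hG.adj_of_adj_adj_adj hb.symm ha hac hab.symm hcv.symm hcb.symm
  refine ⟨Embedding.ofAdjIff ![v, a, c, b] ?_ ?_, ?_⟩
  · intro x y hxy
    fin_cases x <;> fin_cases y <;>
      simp_all [ha.ne, hb.ne, hac.ne, hbc.ne, ha.ne.symm, hb.ne.symm, hac.ne.symm, hbc.ne.symm]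
  · intro x y
    fin_cases x <;> fin_cases y <;>
      simp [cycleGraph_adj, ha, hb, hac, hbc, ha.symm, hb.symm, hac.symm, hbc.symm, nvc, nab,
        mt G.adj_symm nvc, mt G.adj_symm nab] <;> decide
  · intro x y hxy
    fin_cases x
    · rcases hG.eq_or_eq_of_adj ha hb hab hxy with rfl | rfl
      exacts [⟨1, rfl⟩, ⟨3, rfl⟩]
    · rcases hG.eq_or_eq_of_adj ha.symm hac hcv.symm hxy with rfl | rfl
      exacts [⟨0, rfl⟩, ⟨2, rfl⟩]
    · rcases hG.eq_or_eq_of_adj hac.symm hbc.symm hab hxy with rfl | rfl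
      exacts [⟨1, rfl⟩, ⟨3, rfl⟩]
    · rcases hG.eq_or_eq_of_adj hb.symm hbc hcv.symm hxy with rfl | rfl
      exacts [⟨0, rfl⟩, ⟨2, rfl⟩]

theorem exists_isAdjClosed_pathGraph_or_cycleGraph [Nonempty V] (hG : G.IsTriangleClawP3Free) :
    (∃ m, 0 < m ∧ m < 4 ∧ ∃ f : pathGraph m ↪g G, IsAdjClosed f) ∨
      ∃ f : cycleGraph 4 ↪g G, IsAdjClosed f := by
  by_cases hisolated : ∃ v, ∀ y, ¬ G.Adj v y
  · obtain ⟨v, hv⟩ := hisolated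
    exact .inl ⟨1, by norm_num, by norm_num, exists_isAdjClosed_pathGraph_one hv⟩
  push Not at hisolated
  by_cases hleaf : ∃ a b, G.Adj a b ∧ ∀ y, G.Adj a y → y = b
  · obtain ⟨a, b, hab, ha⟩ := hleaf
    by_cases hb : ∃ c, G.Adj b c ∧ c ≠ a
    · obtain ⟨c, hbc, hca⟩ := hb
      exact .inl ⟨3, by norm_num, by norm_num,
        hG.exists_isAdjClosed_pathGraph_three hab ha hbc hca⟩
    · push Not at hb
      exact .inl ⟨2, by norm_num, by norm_num, exists_isAdjClosed_pathGraph_two hab ha hb⟩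
  · push Not at hleaf
    refine .inr (hG.exists_isAdjClosed_cycleGraph_four (fun x => ?_) (Classical.arbitrary V))
    obtain ⟨y, hy⟩ := hisolated x
    obtain ⟨z, hz, hzy⟩ := hleaf x y hy
    exact ⟨y, z, hy, hz, hzy.symm⟩

end IsTriangleClawP3Free

abbrev c4Union (k : ℕ) : SimpleGraph (Fin k × Fin 4) :=
  (⊥ : SimpleGraph (Fin k)) □ cycleGraph 4

def Iso.cycleGraphSumC4Union (k : ℕ) : cycleGraph 4 ⊕g c4Union k ≃g c4Union (k + 1) where
  toFun := Sum.elim (fun j => (0, j)) (fun p => (p.1.succ, p.2))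
  invFun p := Fin.cases (Sum.inl p.2) (fun i => Sum.inr (i, p.2)) p.1
  left_inv := by rintro (j | ⟨i, j⟩) <;> simp
  right_inv := by
    rintro ⟨i, j⟩
    induction i using Fin.cases <;> simp
  map_rel_iff' := by
    rintro (u | ⟨iu, u⟩) (v | ⟨iv, v⟩) <;>
      simp [boxProd_adj, Fin.succ_ne_zero, (Fin.succ_ne_zero _).symm, and_comm]

theorem natCard_edgeSet_cycleGraph_four : Nat.card (cycleGraph 4).edgeSet = 4 := by
  rw [Nat.card_eq_fintype_card]
  decide

theorem natCard_edgeSet_c4Union (k : ℕ) : Nat.card (c4Union k).edgeSet = 4 * k := by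
  induction k with
  | zero => simp
  | succ k ih =>
    rw [← Nat.card_congr (Iso.cycleGraphSumC4Union k).mapEdgeSet, natCard_edgeSet_sum, ih,
      natCard_edgeSet_cycleGraph_four]
    ring

theorem natCard_edgeSet_pathGraph {m : ℕ} (hm : m < 4) :
    Nat.card (pathGraph m).edgeSet = m - 1 := by
  let : DecidableRel (pathGraph m).Adj := fun _ _ => decidable_of_iff _ pathGraph_adj.symm
  rw [Nat.card_eq_fintype_card]
  interval_cases m <;> decide

def edgeBound (n : ℕ) : ℕ := (if n % 4 = 0 then n + 1 else n) - 1

-- `pathGraph r` has `r` vertices: `r = 0, 1, 2, 3` give `J = ∅, K₁, K₂, P₂`.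
def extremalGraph (n : ℕ) : SimpleGraph (Fin (n / 4) × Fin 4 ⊕ Fin (n % 4)) :=
  c4Union (n / 4) ⊕g pathGraph (n % 4)

theorem natCard_edgeSet_extremalGraph (n : ℕ) :
    Nat.card (extremalGraph n).edgeSet = edgeBound n := by
  rw [extremalGraph, natCard_edgeSet_sum, natCard_edgeSet_c4Union,
    natCard_edgeSet_pathGraph (n.mod_lt (by norm_num)), edgeBound]
  split_ifs <;> omega

def ExtremalBound (n : ℕ) (G : SimpleGraph V) : Prop :=
  Nat.card G.edgeSet ≤ edgeBound n ∧
    (Nat.card G.edgeSet = edgeBound n → Nonempty (G ≃g extremalGraph n))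

namespace ExtremalBound

variable {n m : ℕ}

theorem of_iso (e : G ≃g H) (h : ExtremalBound n H) : ExtremalBound n G := by
  rw [ExtremalBound, Nat.card_congr e.mapEdgeSet]
  exact ⟨h.1, fun heq => (h.2 heq).map e.trans⟩

theorem of_isEmpty [IsEmpty V] (G : SimpleGraph V) : ExtremalBound 0 G :=
  ⟨by simp, fun _ =>
    ⟨⟨Equiv.equivOfIsEmpty _ (Fin 0 × Fin 4 ⊕ Fin 0), fun {a} => isEmptyElim a⟩⟩⟩

theorem cycleGraph_sum [Finite W] (h : ExtremalBound n H) :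
    ExtremalBound (4 + n) (cycleGraph 4 ⊕g H) := by
  have hbound : edgeBound (4 + n) = 4 + edgeBound n := by unfold edgeBound; split_ifs <;> omega
  rw [ExtremalBound, natCard_edgeSet_sum, natCard_edgeSet_cycleGraph_four, hbound]
  refine ⟨Nat.add_le_add_left h.1 4, fun heq => ?_⟩
  obtain ⟨e⟩ := h.2 (by omega)
  change Nonempty (_ ≃g c4Union ((4 + n) / 4) ⊕g pathGraph ((4 + n) % 4))
  rw [show (4 + n) / 4 = n / 4 + 1 by omega, show (4 + n) % 4 = n % 4 by omega]
  exact ⟨(Iso.refl.sumCongr e).trans <|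
    Iso.sumAssoc.symm.trans <| (Iso.cycleGraphSumC4Union _).sumCongr Iso.refl⟩

theorem pathGraph_sum [Finite W] (hm0 : 0 < m) (hm4 : m < 4) (h : ExtremalBound n H) :
    ExtremalBound (m + n) (pathGraph m ⊕g H) := by
  obtain ⟨hle, hext⟩ := h
  rw [ExtremalBound, natCard_edgeSet_sum, natCard_edgeSet_pathGraph hm4]
  by_cases hn : n % 4 = 0
  · have hbound : edgeBound (m + n) = m - 1 + edgeBound n := by
      unfold edgeBound; split_ifs <;> omega
    rw [hbound]
    refine ⟨by omega, fun heq => ?_⟩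
    obtain ⟨e⟩ := hext (by omega)
    change H ≃g c4Union (n / 4) ⊕g pathGraph (n % 4) at e
    rw [hn] at e
    change Nonempty (_ ≃g c4Union ((m + n) / 4) ⊕g pathGraph ((m + n) % 4))
    rw [show (m + n) / 4 = n / 4 by omega, show (m + n) % 4 = m by omega]
    exact ⟨(Iso.refl.sumCongr (e.trans (Iso.sumOfIsEmpty _ _))).trans Iso.sumComm⟩
  · have hbound : m - 1 + edgeBound n < edgeBound (m + n) := by
      unfold edgeBound; split_ifs <;> omega
    exact ⟨by omega, fun heq => by omega⟩

end ExtremalBound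

theorem IsTriangleClawP3Free.extremalBound {V : Type u} [Finite V] {G : SimpleGraph V}
    (hG : G.IsTriangleClawP3Free) : ExtremalBound (Nat.card V) G := by
  induction h : Nat.card V using Nat.strong_induction_on generalizing V with
  | _ n ih =>
  rcases isEmpty_or_nonempty V with hV | hV
  · obtain rfl : n = 0 := by rw [← h, Nat.card_of_isEmpty]
    exact .of_isEmpty G
  have peel : ∀ {m} {H : SimpleGraph (Fin m)} (f : H ↪g G), IsAdjClosed f → 0 < m →
      (∀ {W : Type u} [Finite W] {G' : SimpleGraph W}, ExtremalBound (Nat.card W) G' →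
        ExtremalBound (m + Nat.card W) (H ⊕g G')) → ExtremalBound n G := by
    intro m H f hf hm step
    let e := Iso.sumInduceCompl f hf
    have hcard : n = m + Nat.card ↥(Set.range f)ᶜ := by
      rw [← h, ← Nat.card_congr e.toEquiv, Nat.card_sum, Nat.card_fin]
    rw [hcard]
    exact (step (ih _ (by omega) (hG.comap (Embedding.induce _)) rfl)).of_iso e.symm
  rcases hG.exists_isAdjClosed_pathGraph_or_cycleGraph with ⟨m, hm0, hm4, f, hf⟩ | ⟨f, hf⟩
  · exact peel f hf hm0 (ExtremalBound.pathGraph_sum hm0 hm4)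
  · exact peel f hf (by norm_num) ExtremalBound.cycleGraph_sum

theorem exists_iso_c4Union_sum_pathGraph_iff {k : ℕ} :
    (∃ r < 4, Nonempty (G ≃g c4Union k ⊕g pathGraph r)) ↔
      Nonempty (G ≃g c4Union k ⊕g (⊥ : SimpleGraph (Fin 0))) ∨
      Nonempty (G ≃g c4Union k ⊕g (⊥ : SimpleGraph (Fin 1))) ∨
      Nonempty (G ≃g c4Union k ⊕g (⊤ : SimpleGraph (Fin 2))) ∨
      Nonempty (G ≃g c4Union k ⊕g pathGraph 3) := by
  have h0 : pathGraph 0 = ⊥ := Subsingleton.elim _ _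
  have h1 : pathGraph 1 = ⊥ := Subsingleton.elim _ _
  constructor
  · rintro ⟨r, hr, he⟩
    interval_cases r
    · exact .inl (by rwa [h0] at he)
    · exact .inr (.inl (by rwa [h1] at he))
    · exact .inr (.inr (.inl (by rwa [pathGraph_two_eq_top] at he)))
    · exact .inr (.inr (.inr he))
  · rintro (he | he | he | he)
    · exact ⟨0, by norm_num, by rwa [h0]⟩
    · exact ⟨1, by norm_num, by rwa [h1]⟩
    · exact ⟨2, by norm_num, by rwa [pathGraph_two_eq_top]⟩
    · exact ⟨3, by norm_num, he⟩

theorem eq_mod_four_of_iso [Finite V] {n r : ℕ} {J : SimpleGraph (Fin r)} (hV : Nat.card V = n)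
    (e : G ≃g c4Union (n / 4) ⊕g J) : r = n % 4 := by
  have := Nat.card_congr e.toEquiv
  simp only [Nat.card_sum, Nat.card_prod, Nat.card_fin] at this
  omega

end SimpleGraph

open SimpleGraph

/-- A triangle-free graph `G` on `n` vertices with no induced `K_{1,3}` and no induced `P₃`
has exactly `h(n) - 1` edges if and only if `G` is isomorphic to the disjoint union of
`⌊n/4⌋` copies of `C₄` together with a graph `J ∈ {∅, K₁, K₂, P₂}`. -/
theorem edge_bound_extremal_iff (n : ℕ) (G : SimpleGraph (Fin n))
    [Fintype G.edgeSet]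
    (htriangle : G.CliqueFree 3)
    (hstar : ¬ Nonempty (completeBipartiteGraph (Fin 1) (Fin 3) ↪g G))
    (hpath : ¬ Nonempty (SimpleGraph.pathGraph 4 ↪g G)) :
    G.edgeFinset.card = (if n % 4 = 0 then n + 1 else n) - 1 ↔
    (Nonempty (G ≃g (((⊥ : SimpleGraph (Fin (n / 4))) □ SimpleGraph.cycleGraph 4) ⊕g
        (⊥ : SimpleGraph (Fin 0)))) ∨
     Nonempty (G ≃g (((⊥ : SimpleGraph (Fin (n / 4))) □ SimpleGraph.cycleGraph 4) ⊕g
        (⊥ : SimpleGraph (Fin 1)))) ∨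
     Nonempty (G ≃g (((⊥ : SimpleGraph (Fin (n / 4))) □ SimpleGraph.cycleGraph 4) ⊕g
        (⊤ : SimpleGraph (Fin 2)))) ∨
     Nonempty (G ≃g (((⊥ : SimpleGraph (Fin (n / 4))) □ SimpleGraph.cycleGraph 4) ⊕g
        SimpleGraph.pathGraph 3))) := by
  have hbound := IsTriangleClawP3Free.extremalBound ⟨htriangle, hstar, hpath⟩
  rw [Nat.card_fin] at hbound
  rw [edgeFinset_card, ← Nat.card_eq_fintype_card, ← exists_iso_c4Union_sum_pathGraph_iff]
  change _ = edgeBound n ↔ _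
  constructor
  · exact fun h => ⟨n % 4, n.mod_lt (by norm_num), hbound.2 h⟩
  · rintro ⟨r, -, ⟨e⟩⟩
    obtain rfl : r = n % 4 := eq_mod_four_of_iso (Nat.card_fin n) e
    rw [Nat.card_congr e.mapEdgeSet]
    exact natCard_edgeSet_extremalGraph n
end

section
/- Let n ≥ 5 and let f: E(K_n) → {-1, 1} be a weighting that is zero-sum-K_4 free (no 4-element vertex subset has edge weights summing to 0). Let G_{-1} and G_1 be the graphs on the vertex set of K_n whose edge sets are the edges of weight -1 and of weight 1, respectively. Then at least one of G_{-1} and G_1 is triangle-free. -/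
/-!
Call the sign of an edge weight its colour. If `v` lies outside a triangle `T` of colour
`c`, the 4-set `T ∪ {v}` has weight `3c + ∑_{u ∈ T} f{v,u}`, so `v` sends an edge of colour `c`
to `T`; if `v` lies in no triangle of colour `c` it sends exactly one, i.e. `∑_{u ∈ T} f{v,u} = -c`.
A negative and a positive triangle cannot share a vertex, so if both exist they are disjoint,
and the total weight of the nine edges between them is `3` counted from one side and `-3` from
the other.
-/

open Finset

section

variable {V : Type*}

def cliqueWeight (f : Finset V → ℤ) (s : Finset V) : ℤ :=
  ∑ e ∈ s.powersetCard 2, f e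

@[simp]
theorem cliqueWeight_singleton (f : Finset V → ℤ) (a : V) : cliqueWeight f {a} = 0 := by
  simp [cliqueWeight, powersetCard_eq_empty.mpr]

variable [DecidableEq V]

def IsSignWeighting (f : Finset V → ℤ) : Prop :=
  ∀ u v : V, u ≠ v → f {u, v} = -1 ∨ f {u, v} = 1

def ZeroSumK4Free (f : Finset V → ℤ) : Prop :=
  ∀ s : Finset V, #s = 4 → cliqueWeight f s ≠ 0

def IsColorClass (f : Finset V → ℤ) (c : ℤ) (G : SimpleGraph V) : Prop :=
  ∀ u v : V, G.Adj u v ↔ u ≠ v ∧ f {u, v} = c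

theorem cliqueWeight_insert (f : Finset V → ℤ) {a : V} {s : Finset V} (ha : a ∉ s) :
    cliqueWeight f (insert a s) = cliqueWeight f s + ∑ b ∈ s, f {a, b} := by
  have hdisj : Disjoint (s.powersetCard 2) ((s.powersetCard 1).image (insert a)) := by
    simp only [disjoint_left, mem_image, mem_powersetCard]
    rintro _ ⟨hsub, -⟩ ⟨t, -, rfl⟩
    exact ha (hsub (mem_insert_self a t))
  have hinj : Set.InjOn (insert a) (s.powersetCard 1 : Set (Finset V)) := by
    intro t ht t' ht' h
    have hat : a ∉ t := fun h' => ha ((mem_powersetCard.mp ht).1 h')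
    have hat' : a ∉ t' := fun h' => ha ((mem_powersetCard.mp ht').1 h')
    rw [← erase_insert hat, ← erase_insert hat']
    exact congrArg (·.erase a) h
  rw [cliqueWeight, powersetCard_succ_insert ha, sum_union hdisj, sum_image hinj,
    powersetCard_one, sum_map]
  rfl

theorem IsColorClass.cliqueWeight_eq {f : Finset V → ℤ} {c : ℤ} {G : SimpleGraph V}
    (hG : IsColorClass f c G) {s : Finset V} (hs : G.IsClique s) :
    cliqueWeight f s = c * (#s).choose 2 := by
  rw [cliqueWeight, ← card_powersetCard, ← nsmul_eq_mul', ← sum_const]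
  refine sum_congr rfl fun e he => ?_
  obtain ⟨hsub, hcard⟩ := mem_powersetCard.mp he
  obtain ⟨u, v, huv, rfl⟩ := card_eq_two.mp hcard
  exact ((hG u v).mp (hs (hsub (by simp)) (hsub (by simp)) huv)).2

theorem exists_eq_triple_of_mem {s : Finset V} (hs : #s = 3) {v : V} (hv : v ∈ s) :
    ∃ b c, s = {v, b, c} := by
  obtain ⟨b, c, -, h⟩ := card_eq_two.mp (by rw [card_erase_of_mem hv, hs] : #(s.erase v) = 2)
  exact ⟨b, c, by rw [← insert_erase hv, h]⟩

theorem ZeroSumK4Free.three_mul_add_sum_ne_zero {f : Finset V → ℤ} (hf : ZeroSumK4Free f)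
    {c : ℤ} {G : SimpleGraph V} (hG : IsColorClass f c G) {T : Finset V} (hT : G.IsNClique 3 T)
    {v : V} (hv : v ∉ T) : 3 * c + ∑ u ∈ T, f {v, u} ≠ 0 := by
  have h := hf (insert v T) (by rw [card_insert_of_notMem hv, hT.card_eq])
  rwa [cliqueWeight_insert f hv, hG.cliqueWeight_eq hT.isClique, hT.card_eq, mul_comm] at h

theorem sum_eq_neg_of_isNClique {f : Finset V → ℤ} (hs : IsSignWeighting f)
    (hf : ZeroSumK4Free f) {c : ℤ} (hc : c = -1 ∨ c = 1) {G : SimpleGraph V}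
    (hG : IsColorClass f c G) {T : Finset V} (hT : G.IsNClique 3 T) {v : V} (hv : v ∉ T)
    (hvG : ∀ t, G.IsNClique 3 t → v ∉ t) : ∑ u ∈ T, f {v, u} = -c := by
  have hK4 := hf.three_mul_add_sum_ne_zero hG hT hv
  obtain ⟨a, b, d, hab, had, hbd, rfl⟩ := card_eq_three.mp hT.card_eq
  simp only [mem_insert, mem_singleton, not_or] at hv
  obtain ⟨hva, hvb, hvd⟩ := hv
  have hnot_both : ∀ x y, v ≠ x → v ≠ y → G.Adj x y → ¬(f {v, x} = c ∧ f {v, y} = c) := by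
    rintro x y hvx hvy hxy ⟨hx, hy⟩
    exact hvG {v, x, y} (SimpleGraph.is3Clique_triple_iff.mpr
      ⟨(hG v x).mpr ⟨hvx, hx⟩, (hG v y).mpr ⟨hvy, hy⟩, hxy⟩) (mem_insert_self v _)
  obtain ⟨hGab, hGad, hGbd⟩ := SimpleGraph.is3Clique_triple_iff.mp hT
  have := hnot_both a b hva hvb hGab
  have := hnot_both a d hva hvd hGad
  have := hnot_both b d hvb hvd hGbd
  have := hs v a hva
  have := hs v b hvb
  have := hs v d hvd
  rw [sum_insert (by simp [hab, had]), sum_insert (by simpa using hbd), sum_singleton] at hK4 ⊢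
  omega

theorem disjoint_of_isNClique_three {f : Finset V → ℤ} (hs : IsSignWeighting f)
    (hf : ZeroSumK4Free f) {G H : SimpleGraph V} (hG : IsColorClass f (-1) G)
    (hH : IsColorClass f 1 H) {T S : Finset V} (hT : G.IsNClique 3 T) (hS : H.IsNClique 3 S) :
    Disjoint T S := by
  rw [disjoint_left]
  intro v hvT hvS
  obtain ⟨b, c, rfl⟩ := exists_eq_triple_of_mem hT.card_eq hvT
  obtain ⟨y, z, rfl⟩ := exists_eq_triple_of_mem hS.card_eq hvS
  obtain ⟨hvb, hvc, hbc⟩ := SimpleGraph.is3Clique_triple_iff.mp hT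
  obtain ⟨hvy, hvz, hyz⟩ := SimpleGraph.is3Clique_triple_iff.mp hS
  obtain ⟨-, fvb⟩ := (hG v b).mp hvb
  obtain ⟨-, fvc⟩ := (hG v c).mp hvc
  obtain ⟨-, fbc⟩ := (hG b c).mp hbc
  obtain ⟨-, fvy⟩ := (hH v y).mp hvy
  obtain ⟨-, fvz⟩ := (hH v z).mp hvz
  obtain ⟨-, fyz⟩ := (hH y z).mp hyz
  have hby : b ≠ y := by rintro rfl; linarith
  have hbz : b ≠ z := by rintro rfl; linarith
  have hcy : c ≠ y := by rintro rfl; linarith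
  have hcz : c ≠ z := by rintro rfl; linarith
  -- The edges between {b, c} and {y, z} must form a positive and a negative perfect matching,
  -- which makes {b, c, y, z} zero-sum.
  have hy := hf.three_mul_add_sum_ne_zero hG hT (v := y) (by simp [hvy.ne', hby.symm, hcy.symm])
  have hz := hf.three_mul_add_sum_ne_zero hG hT (v := z) (by simp [hvz.ne', hbz.symm, hcz.symm])
  have hb := hf.three_mul_add_sum_ne_zero hH hS (v := b) (by simp [hvb.ne', hby, hbz])
  have hc := hf.three_mul_add_sum_ne_zero hH hS (v := c) (by simp [hvc.ne', hcy, hcz])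
  have hbcyz := hf {b, c, y, z}
    (by simp [card_insert_of_notMem, hbc.ne, hby, hbz, hcy, hcz, hyz.ne])
  simp only [Int.reduceNeg, mul_neg, mul_one, mem_insert, mem_singleton, or_self, ne_eq,
    not_false_eq_true, sum_insert, sum_singleton, cliqueWeight_insert, cliqueWeight_singleton,
    zero_add, hvb.ne, hvc.ne, hbc.ne, hvy.ne, hvz.ne, hyz.ne, hby, hbz, hcy, hcz]
    at hy hz hb hc hbcyz
  have := hs b y hby
  have := hs b z hbz
  have := hs c y hcy
  have := hs c z hcz
  simp only [pair_comm] at *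
  omega

theorem cliqueFree_three_or_cliqueFree_three {f : Finset V → ℤ} (hs : IsSignWeighting f)
    (hf : ZeroSumK4Free f) {G H : SimpleGraph V} (hG : IsColorClass f (-1) G)
    (hH : IsColorClass f 1 H) : G.CliqueFree 3 ∨ H.CliqueFree 3 := by
  by_contra h
  simp only [not_or, SimpleGraph.CliqueFree, not_forall, not_not] at h
  obtain ⟨⟨T, hT⟩, ⟨S, hS⟩⟩ := h
  have hcol : ∀ x ∈ S, ∑ a ∈ T, f {x, a} = 1 := fun x hx => by
    simpa using sum_eq_neg_of_isNClique hs hf (Or.inl rfl) hG hT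
      (disjoint_right.mp (disjoint_of_isNClique_three hs hf hG hH hT hS) hx)
      (fun t ht => disjoint_right.mp (disjoint_of_isNClique_three hs hf hG hH ht hS) hx)
  have hrow : ∀ a ∈ T, ∑ x ∈ S, f {a, x} = -1 := fun a ha =>
    sum_eq_neg_of_isNClique hs hf (Or.inr rfl) hH hS
      (disjoint_left.mp (disjoint_of_isNClique_three hs hf hG hH hT hS) ha)
      (fun t ht => disjoint_left.mp (disjoint_of_isNClique_three hs hf hG hH hT ht) ha)
  have hcard : (#S : ℤ) = -#T := calc
    (#S : ℤ) = ∑ x ∈ S, ∑ a ∈ T, f {x, a} := by simp [sum_congr rfl hcol]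
    _ = ∑ a ∈ T, ∑ x ∈ S, f {a, x} := by rw [sum_comm]; simp_rw [pair_comm]
    _ = -#T := by simp [sum_congr rfl hrow]
  rw [hT.card_eq, hS.card_eq] at hcard
  omega

end

theorem one_color_class_triangle_free_general (n : ℕ) (f : Finset (Fin n) → ℤ)
    (hf : ∀ e ∈ Finset.powersetCard 2 (Finset.univ : Finset (Fin n)), f e = -1 ∨ f e = 1)
    (hfree : ∀ S ∈ Finset.powersetCard 4 (Finset.univ : Finset (Fin n)),
      (∑ e ∈ Finset.powersetCard 2 S, f e) ≠ 0)
    (Gm G1 : SimpleGraph (Fin n))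
    (hGm : ∀ u v : Fin n, Gm.Adj u v ↔ u ≠ v ∧ f ({u, v} : Finset (Fin n)) = -1)
    (hG1 : ∀ u v : Fin n, G1.Adj u v ↔ u ≠ v ∧ f ({u, v} : Finset (Fin n)) = 1) :
    Gm.CliqueFree 3 ∨ G1.CliqueFree 3 :=
  cliqueFree_three_or_cliqueFree_three
    (fun u v huv => hf {u, v} (mem_powersetCard.mpr ⟨subset_univ _, card_pair huv⟩))
    (fun s hs => hfree s (mem_powersetCard.mpr ⟨subset_univ _, hs⟩)) hGm hG1

/-- If `n ≥ 5` and `f : E(K_n) → {-1,1}` is zero-sum-`K₄` free, then at least one of the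
graphs `G₋₁` (edges of weight `-1`) and `G₁` (edges of weight `1`) is triangle-free. -/
theorem one_color_class_triangle_free (n : ℕ) (hn : 5 ≤ n) (f : Finset (Fin n) → ℤ)
    (hf : ∀ e ∈ Finset.powersetCard 2 (Finset.univ : Finset (Fin n)), f e = -1 ∨ f e = 1)
    (hfree : ∀ S ∈ Finset.powersetCard 4 (Finset.univ : Finset (Fin n)),
      (∑ e ∈ Finset.powersetCard 2 S, f e) ≠ 0)
    (Gm G1 : SimpleGraph (Fin n))
    (hGm : ∀ u v : Fin n, Gm.Adj u v ↔ u ≠ v ∧ f ({u, v} : Finset (Fin n)) = -1)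
    (hG1 : ∀ u v : Fin n, G1.Adj u v ↔ u ≠ v ∧ f ({u, v} : Finset (Fin n)) = 1) :
    Gm.CliqueFree 3 ∨ G1.CliqueFree 3 :=
  one_color_class_triangle_free_general n f hf hfree Gm G1 hGm hG1
end

section
/- Let the vertex set of K_n be partitioned as X ∪ Y with 2|X|(|X| − 1) = |Y|(|Y| − 1), and define f: E(K_n) → {-2, -1, 0, 1, 2} by f(uv) = -2 if u, v ∈ X, f(uv) = 1 if u, v ∈ Y, and f(uv) = 0 otherwise. Then ∑_{e ∈ E(K_n)} f(e) = 0 and f is zero-sum-K_4 free (no 4-element vertex subset has edge weights summing to 0). -/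
/-!
On a vertex set `S`, the edges inside `X` contribute `-2` each and those inside `Y` contribute `1`
each, so the weight of `S` is `C(|S ∩ Y|, 2) - 2 C(|S ∩ X|, 2)`. For `S` the whole vertex set this
vanishes by the hypothesis `|Y|(|Y| - 1) = 2|X|(|X| - 1)`, while for `|S| = 4` the five possible
splits `|S ∩ X| + |S ∩ Y| = 4` give the weights `6, 3, -1, -6, -12`, none of them zero.
-/

open Finset

lemma two_mul_choose_two (n : ℕ) : 2 * n.choose 2 = n * (n - 1) := by
  rw [Nat.choose_two_right, Nat.mul_div_cancel' (Nat.even_mul_pred_self n).two_dvd]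

lemma two_mul_choose_two_ne_choose_two {a b : ℕ} (hab : a + b = 4) :
    2 * a.choose 2 ≠ b.choose 2 := by
  obtain rfl : b = 4 - a := by omega
  have ha : a ≤ 4 := by omega
  interval_cases a <;> decide

lemma card_inter_add_card_inter {α : Type*} [DecidableEq α] {X Y S : Finset α}
    (hdisj : Disjoint X Y) (hS : S ⊆ X ∪ Y) : #(S ∩ X) + #(S ∩ Y) = #S := by
  rw [← card_union_of_disjoint (hdisj.mono inter_subset_right inter_subset_right),
    ← inter_union_distrib_left, inter_eq_left.2 hS]

section Weighting

variable {α : Type*} [DecidableEq α] {X Y : Finset α} {f : Finset α → ℤ}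

lemma weight_eq_of_card_eq_two (hdisj : Disjoint X Y)
    (hf : ∀ e : Finset α, #e = 2 →
      (e ⊆ X → f e = -2) ∧ (e ⊆ Y → f e = 1) ∧ (¬ e ⊆ X → ¬ e ⊆ Y → f e = 0))
    {e : Finset α} (he : #e = 2) :
    f e = (if e ⊆ Y then 1 else 0) - 2 * (if e ⊆ X then 1 else 0) := by
  obtain ⟨hX, hY, hXY⟩ := hf e he
  by_cases heX : e ⊆ X
  · have heY : ¬ e ⊆ Y := fun heY ↦ by
      have : e = ∅ := disjoint_self.1 (hdisj.mono heX heY)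
      simp [this] at he
    simp [heX, heY, hX heX]
  · by_cases heY : e ⊆ Y <;> simp [heX, heY, hY, hXY]

lemma filter_subset_powersetCard (S T : Finset α) (k : ℕ) :
    (powersetCard k S).filter (· ⊆ T) = powersetCard k (S ∩ T) := by
  ext e
  simp only [mem_filter, mem_powersetCard, subset_inter_iff]
  tauto

lemma sum_powersetCard_two_eq (hdisj : Disjoint X Y)
    (hf : ∀ e : Finset α, #e = 2 →
      (e ⊆ X → f e = -2) ∧ (e ⊆ Y → f e = 1) ∧ (¬ e ⊆ X → ¬ e ⊆ Y → f e = 0))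
    (S : Finset α) :
    ∑ e ∈ powersetCard 2 S, f e = (#(S ∩ Y)).choose 2 - 2 * (#(S ∩ X)).choose 2 := by
  rw [sum_congr rfl fun e he ↦ weight_eq_of_card_eq_two hdisj hf (mem_powersetCard.1 he).2,
    sum_sub_distrib, ← mul_sum, sum_boole, sum_boole, filter_subset_powersetCard,
    filter_subset_powersetCard, card_powersetCard, card_powersetCard]

end Weighting

/-- If `V(K_n) = X ∪ Y` with `2|X|(|X|-1) = |Y|(|Y|-1)` and `f` is `-2` on edges inside `X`,
`1` on edges inside `Y` and `0` on crossing edges, then `∑ f = 0` and `f` is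
zero-sum-`K₄` free. -/
theorem partition_weighting_zero_sum_K4_free (n : ℕ) (X Y : Finset (Fin n))
    (hdisj : Disjoint X Y) (hcover : X ∪ Y = Finset.univ)
    (hXY : 2 * (X.card * (X.card - 1)) = Y.card * (Y.card - 1))
    (f : Finset (Fin n) → ℤ)
    (hf : ∀ e ∈ Finset.powersetCard 2 (Finset.univ : Finset (Fin n)),
      (e ⊆ X → f e = -2) ∧ (e ⊆ Y → f e = 1) ∧ (¬ e ⊆ X → ¬ e ⊆ Y → f e = 0)) :
    (∑ e ∈ Finset.powersetCard 2 (Finset.univ : Finset (Fin n)), f e) = 0 ∧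
    (∀ S ∈ Finset.powersetCard 4 (Finset.univ : Finset (Fin n)),
      (∑ e ∈ Finset.powersetCard 2 S, f e) ≠ 0) := by
  have hf' (e : Finset (Fin n)) (he : #e = 2) := hf e (mem_powersetCard.2 ⟨subset_univ e, he⟩)
  refine ⟨?_, fun S hS ↦ ?_⟩
  · have hchoose : Y.card.choose 2 = 2 * X.card.choose 2 := by
      have := two_mul_choose_two X.card
      have := two_mul_choose_two Y.card
      omega
    rw [sum_powersetCard_two_eq hdisj hf', univ_inter, univ_inter, hchoose]
    push_cast
    ring
  · have hcard : #(S ∩ X) + #(S ∩ Y) = 4 := by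
      rw [card_inter_add_card_inter hdisj (hcover ▸ subset_univ S), (mem_powersetCard.1 hS).2]
    rw [sum_powersetCard_two_eq hdisj hf', sub_ne_zero]
    exact_mod_cast (two_mul_choose_two_ne_choose_two hcard).symm
end

section
/- There are infinitely many pairs (x, y) of positive odd integers satisfying the Pell equation y² − 2x² = −1; consequently, there are infinitely many pairs (a, b) of positive integers with 2a(a − 1) = b(b − 1) (namely a = (x+1)/2, b = (y+1)/2). -/
/-!
The map `(x, y) ↦ (3x + 2y, 4x + 3y)` is multiplication by the unit `3 + 2√2` of norm `1`, so it
preserves `y² - 2x²`; it also preserves the parity of both coordinates and strictly increases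
positive `x`. Iterating it from `(1, 1)` therefore produces infinitely many positive odd solutions
of `y² - 2x² = -1`. Every such solution is `(2a - 1, 2b - 1)` for positive integers `a, b`, and
`(2b - 1)² - 2(2a - 1)² + 1 = 4(b(b - 1) - 2a(a - 1))`.
-/

open Set Function

theorem Set.infinite_of_mapsTo_of_lt {α β : Type*} [Preorder β] {s : Set α} {f : α → α}
    (g : α → β) (hf : MapsTo f s s) (hg : ∀ x ∈ s, g x < g (f x)) (hs : s.Nonempty) :
    s.Infinite := by
  obtain ⟨x, hx⟩ := hs
  have hmono : StrictMono fun n => g (f^[n] x) := by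
    refine strictMono_nat_of_lt_succ fun n => ?_
    rw [iterate_succ_apply']
    exact hg _ (hf.iterate n hx)
  exact infinite_of_injective_forall_mem (fun m n h => hmono.injective (congrArg g h))
    fun n => hf.iterate n hx

def pellStep (p : ℤ × ℤ) : ℤ × ℤ := (3 * p.1 + 2 * p.2, 4 * p.1 + 3 * p.2)

def oddPellPairs : Set (ℤ × ℤ) :=
  {p | 0 < p.1 ∧ 0 < p.2 ∧ Odd p.1 ∧ Odd p.2 ∧ p.2 ^ 2 - 2 * p.1 ^ 2 = -1}

theorem pellStep_snd_sq_sub (p : ℤ × ℤ) :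
    (pellStep p).2 ^ 2 - 2 * (pellStep p).1 ^ 2 = p.2 ^ 2 - 2 * p.1 ^ 2 := by
  simp only [pellStep]
  ring

theorem mapsTo_pellStep_oddPellPairs : MapsTo pellStep oddPellPairs oddPellPairs := by
  rintro ⟨x, y⟩ ⟨hx, hy, hx_odd, hy_odd, hxy⟩
  refine ⟨?_, ?_, ?_, ?_, ?_⟩
  · change 0 < 3 * x + 2 * y
    linarith
  · change 0 < 4 * x + 3 * y
    linarith
  · exact ((Int.odd_iff.mpr rfl : Odd (3 : ℤ)).mul hx_odd).add_even (even_two.mul_right y)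
  · exact ((Int.even_iff.mpr rfl : Even (4 : ℤ)).mul_right x).add_odd
      ((Int.odd_iff.mpr rfl : Odd (3 : ℤ)).mul hy_odd)
  · rw [pellStep_snd_sq_sub]
    exact hxy

theorem oddPellPairs_infinite : oddPellPairs.Infinite := by
  refine infinite_of_mapsTo_of_lt Prod.fst mapsTo_pellStep_oddPellPairs ?_
    ⟨(1, 1), by norm_num [oddPellPairs]⟩
  rintro ⟨x, y⟩ ⟨hx, hy, -⟩
  change x < 3 * x + 2 * y
  linarith

theorem Int.exists_nat_eq_two_mul_sub_one {x : ℤ} (hx : 0 < x) (hx_odd : Odd x) :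
    ∃ a : ℕ, 0 < a ∧ x = 2 * a - 1 := by
  obtain ⟨k, rfl⟩ := hx_odd
  lift k to ℕ using by omega
  exact ⟨k + 1, k.succ_pos, by push_cast; ring⟩

theorem Nat.two_mul_mul_sub_one_eq_iff {a b : ℕ} (ha : 0 < a) (hb : 0 < b) :
    2 * (a * (a - 1)) = b * (b - 1) ↔ (2 * b - 1 : ℤ) ^ 2 - 2 * (2 * a - 1) ^ 2 = -1 := by
  zify [ha, hb]
  constructor <;> intro h <;> linarith

/-- There are infinitely many pairs of positive odd integers `(x, y)` with `y² - 2x² = -1`;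
consequently there are infinitely many pairs of positive integers `(a, b)` with
`2a(a-1) = b(b-1)`. -/
theorem infinitely_many_pell_pairs :
    {p : ℤ × ℤ | 0 < p.1 ∧ 0 < p.2 ∧ Odd p.1 ∧ Odd p.2 ∧
      p.2 ^ 2 - 2 * p.1 ^ 2 = -1}.Infinite ∧
    {p : ℕ × ℕ | 0 < p.1 ∧ 0 < p.2 ∧
      2 * (p.1 * (p.1 - 1)) = p.2 * (p.2 - 1)}.Infinite := by
  refine ⟨oddPellPairs_infinite, Infinite.of_image (fun p => ((2 * p.1 - 1 : ℤ), (2 * p.2 - 1 : ℤ)))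
    (oddPellPairs_infinite.mono ?_)⟩
  rintro ⟨x, y⟩ ⟨hx, hy, hx_odd, hy_odd, hxy⟩
  obtain ⟨a, ha, rfl⟩ := Int.exists_nat_eq_two_mul_sub_one hx hx_odd
  obtain ⟨b, hb, rfl⟩ := Int.exists_nat_eq_two_mul_sub_one hy hy_odd
  exact ⟨(a, b), ⟨ha, hb, (Nat.two_mul_mul_sub_one_eq_iff ha hb).mpr hxy⟩, rfl⟩
end

section
/- Define sequences of integers by Q_0 = 1, Q_1 = 1, Q_{k+1} = 2Q_k + Q_{k−1} (the half-companion Pell numbers, satisfying Q_k = ((1+√2)^k + (1−√2)^k)/2). Then for every positive integer k with k ≡ 1 (mod 4), Q_k + 1 = 2 · Q_{(k−1)/2} · Q_{(k+1)/2}. -/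
/-- The half-companion Pell numbers: `Q 0 = 1`, `Q 1 = 1`, `Q (k+2) = 2 Q (k+1) + Q k`,
so that `Q k = ((1+√2)^k + (1-√2)^k)/2`. -/
def halfCompanionPell : ℕ → ℤ
  | 0 => 1
  | 1 => 1
  | (k + 2) => 2 * halfCompanionPell (k + 1) + halfCompanionPell k

/-!
With `a = 1 + √2` and `b = 1 - √2` we have `2 Q_n = a^n + b^n`, `a b = -1` and `a + b = 2`, so
`4 Q_m Q_{m+1} = (a^m + b^m)(a^{m+1} + b^{m+1}) = a^{2m+1} + b^{2m+1} + (ab)^m (a + b)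
= 2 Q_{2m+1} + 2 (-1)^m`. For `k = 4j + 1` take `m = 2j`, where the sign is `+1`.
-/

lemma sq_one_add_sqrt_two : (1 + √2) ^ 2 = 2 * (1 + √2) + 1 := by
  linear_combination Real.sq_sqrt (zero_le_two : (0 : ℝ) ≤ 2)

lemma sq_one_sub_sqrt_two : (1 - √2) ^ 2 = 2 * (1 - √2) + 1 := by
  linear_combination Real.sq_sqrt (zero_le_two : (0 : ℝ) ≤ 2)

lemma one_add_sqrt_two_mul_one_sub_sqrt_two : (1 + √2) * (1 - √2) = -1 := by
  linear_combination -Real.sq_sqrt (zero_le_two : (0 : ℝ) ≤ 2)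

lemma coe_halfCompanionPell_eq (n : ℕ) :
    (halfCompanionPell n : ℝ) = ((1 + √2) ^ n + (1 - √2) ^ n) / 2 := by
  induction n using Nat.twoStepInduction with
  | zero => norm_num [halfCompanionPell]
  | one => norm_num [halfCompanionPell]
  | more n ih₀ ih₁ =>
    rw [halfCompanionPell, Int.cast_add, Int.cast_mul, ih₀, ih₁, pow_add _ n 2, pow_add _ n 2,
      sq_one_add_sqrt_two, sq_one_sub_sqrt_two]
    ring

lemma halfCompanionPell_two_mul_add_one (m : ℕ) :
    halfCompanionPell (2 * m + 1) + (-1) ^ m =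
      2 * halfCompanionPell m * halfCompanionPell (m + 1) := by
  have hsign : (-1 : ℝ) ^ m = (1 + √2) ^ m * (1 - √2) ^ m := by
    rw [← mul_pow, one_add_sqrt_two_mul_one_sub_sqrt_two]
  suffices h : (halfCompanionPell (2 * m + 1) + (-1) ^ m : ℝ) =
      2 * halfCompanionPell m * halfCompanionPell (m + 1) by exact_mod_cast h
  simp only [coe_halfCompanionPell_eq]
  linear_combination hsign

theorem halfCompanionPell_add_one_of_mod_four_eq_one_general (k : ℕ)
    (hmod : k % 4 = 1) :
    halfCompanionPell k + 1 =
      2 * halfCompanionPell ((k - 1) / 2) * halfCompanionPell ((k + 1) / 2) := by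
  obtain ⟨j, rfl⟩ : ∃ j, k = 2 * (2 * j) + 1 := ⟨k / 4, by omega⟩
  have hlo : (2 * (2 * j) + 1 - 1) / 2 = 2 * j := by omega
  have hhi : (2 * (2 * j) + 1 + 1) / 2 = 2 * j + 1 := by omega
  rw [hlo, hhi, ← halfCompanionPell_two_mul_add_one, (even_two_mul j).neg_one_pow]

/-- For `k ≡ 1 (mod 4)`, `Q_k + 1 = 2 Q_{(k-1)/2} Q_{(k+1)/2}`. -/
theorem halfCompanionPell_add_one_of_mod_four_eq_one (k : ℕ) (hk : 0 < k)
    (hmod : k % 4 = 1) :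
    halfCompanionPell k + 1 =
      2 * halfCompanionPell ((k - 1) / 2) * halfCompanionPell ((k + 1) / 2) :=
  halfCompanionPell_add_one_of_mod_four_eq_one_general k hmod
end
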